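/- arXiv:1604.07970 — 4 statements merged into one kernel-verified Lean document; each statement's English description precedes it below -/
import Mathlib

section
/- Let P be a shift-invariant, local, non-degenerate probabilistic cellular automaton on S^{Z^d} and suppose μ is a stationary measure for P which is also a shift-invariant Gibbs measure for a shift-invariant potential Φ (μ ∈ G_s(Φ)). Then for every shift-invariant probability measure ν on S^{Z^d}, the specific relative entropy does not increase under one step of the dynamics: h(Pν|μ) ≤ h(ν|μ). -/
open MeasureTheory Filter
open scoped ENNReal

namespace PCAG

noncomputable section

/-- Sites of the lattice `ℤ^d`. -/
abbrev Site (d : ℕ) := Fin d → ℤ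

/-- Configuration space `S^{ℤ^d}`. -/
abbrev Conf (d : ℕ) (S : Type*) := Site d → S

variable {d : ℕ} {S : Type*}

/-- The shift `θ_i` on configurations: `(θ_i η)_j = η_{i+j}`. -/
def shift (i : Site d) (η : Conf d S) : Conf d S := fun j => η (i + j)

/-- The cylinder set of configurations agreeing with `a` on `Λ`. -/
def cyl (Λ : Finset (Site d)) (a : ↥Λ → S) : Set (Conf d S) :=
  {σ : Conf d S | ∀ j : ↥Λ, σ j.1 = a j}

/-- `P` is the PCA kernel with single site probabilities `p_i(s|η)`: on every cylinder,
`P(·|η)` is the product of the single site probabilities. -/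
def IsPCA [MeasurableSpace S] (P : ProbabilityTheory.Kernel (Conf d S) (Conf d S))
    (p : Site d → S → Conf d S → ℝ≥0∞) : Prop :=
  ∀ (η : Conf d S) (Λ : Finset (Site d)) (a : ↥Λ → S),
    P η (cyl Λ a) = ∏ j : ↥Λ, p j.1 (a j) η

/-- Shift invariance of the single site probabilities: `p_i(s|η) = p_0(s|θ_i η)`. -/
def ShiftInvPCA (p : Site d → S → Conf d S → ℝ≥0∞) : Prop :=
  ∀ (i : Site d) (s : S) (η : Conf d S), p i s η = p 0 s (shift i η)

/-- Locality of the PCA: `p_0(s|·)` depends on finitely many coordinates. -/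
def LocalPCA (p : Site d → S → Conf d S → ℝ≥0∞) : Prop :=
  ∃ Λ₀ : Finset (Site d), ∀ (s : S) (η η' : Conf d S),
    (∀ j ∈ Λ₀, η j = η' j) → p 0 s η = p 0 s η'

/-- Non-degeneracy of the PCA: `p_0(s|η) > 0`. -/
def NonDegPCA (p : Site d → S → Conf d S → ℝ≥0∞) : Prop :=
  ∀ (s : S) (η : Conf d S), 0 < p 0 s η

/-- A shift-invariant (absolutely summable) potential: each `Φ_Λ` depends only on the
spins in `Λ`, `Φ_{Λ+i} = Φ_Λ ∘ θ_i`, and `Σ_{Λ∋0} ‖Φ_Λ‖_∞ < ∞`. -/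
def IsPotential (Φ : Finset (Site d) → Conf d S → ℝ) : Prop :=
  (∀ (Λ : Finset (Site d)) (σ σ' : Conf d S), (∀ j ∈ Λ, σ j = σ' j) → Φ Λ σ = Φ Λ σ') ∧
  (∀ (i : Site d) (Λ : Finset (Site d)) (σ : Conf d S),
    Φ (Λ.image (· + i)) σ = Φ Λ (shift i σ)) ∧
  Summable (fun Λ : {Λ : Finset (Site d) // (0 : Site d) ∈ Λ} => ⨆ σ : Conf d S, |Φ Λ.1 σ|)

/-- The configuration equal to `a` on `Λ` and to `τ` outside `Λ`. -/
def fill (Λ : Finset (Site d)) (a : ↥Λ → S) (τ : Conf d S) : Conf d S :=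
  fun j => if h : j ∈ Λ then a ⟨j, h⟩ else τ j

/-- The Hamiltonian `H_Λ^τ(a) = Σ_{A ∩ Λ ≠ ∅} Φ_A(a_Λ τ_{Λ^c})`. -/
def ham (Φ : Finset (Site d) → Conf d S → ℝ) (Λ : Finset (Site d)) (a : ↥Λ → S)
    (τ : Conf d S) : ℝ :=
  ∑' A : {A : Finset (Site d) // (A ∩ Λ).Nonempty}, Φ A.1 (fill Λ a τ)

/-- The finite volume Gibbs weight `μ_Λ^τ(a) = exp(-H_Λ^τ(a))/Z_Λ^τ`. -/
def gibbsW [Fintype S] (Φ : Finset (Site d) → Conf d S → ℝ) (Λ : Finset (Site d))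
    (a : ↥Λ → S) (τ : Conf d S) : ℝ :=
  Real.exp (-(ham Φ Λ a τ)) / ∑ b : ↥Λ → S, Real.exp (-(ham Φ Λ b τ))

/-- The σ-algebra generated by the spins outside `Λ`. -/
def outer [MeasurableSpace S] (Λ : Finset (Site d)) : MeasurableSpace (Conf d S) :=
  MeasurableSpace.comap (fun σ (j : {j : Site d // j ∉ Λ}) => σ j.1) MeasurableSpace.pi

/-- `μ` is a Gibbs measure for `Φ` (DLR equations): for every finite `Λ`, conditionally on
the configuration outside `Λ`, the configuration on `Λ` is distributed according to the
finite volume Gibbs measure `μ_Λ^τ`. -/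
def IsGibbs [MeasurableSpace S] [Fintype S] (Φ : Finset (Site d) → Conf d S → ℝ)
    (μ : Measure (Conf d S)) : Prop :=
  ∀ (Λ : Finset (Site d)) (a : ↥Λ → S) (B : Set (Conf d S)),
    MeasurableSet[outer Λ] B →
    μ (cyl Λ a ∩ B) = ∫⁻ τ in B, ENNReal.ofReal (gibbsW Φ Λ a τ) ∂μ

/-- A shift-invariant measure: `μ ∘ θ_i = μ`. -/
def ShiftInvMeas [MeasurableSpace S] (μ : Measure (Conf d S)) : Prop :=
  ∀ i : Site d, μ.map (shift i) = μ

/-- The local relative entropy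
`h_Λ(ν|μ) = Σ_{σ_Λ} π_Λν(σ_Λ) log (π_Λν(σ_Λ) / π_Λμ(σ_Λ))`. -/
def localEnt [MeasurableSpace S] [Fintype S] (Λ : Finset (Site d))
    (ν μ' : Measure (Conf d S)) : ℝ :=
  ∑ a : ↥Λ → S,
    (ν (cyl Λ a)).toReal * Real.log ((ν (cyl Λ a)).toReal / (μ' (cyl Λ a)).toReal)

/-- The centered hypercube `[-n,n]^d ∩ ℤ^d`. -/
def box (d : ℕ) (n : ℕ) : Finset (Site d) :=
  Fintype.piFinset fun _ => Finset.Icc (-(n : ℤ)) (n : ℤ)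

/-- The specific relative entropy `h(ν|μ) = limsup_{Λ↑ℤ^d} h_Λ(ν|μ)/|Λ|`, the limsup
being taken along hypercubes centered at the origin. -/
def specEnt [MeasurableSpace S] [Fintype S] (ν μ' : Measure (Conf d S)) : ℝ :=
  Filter.limsup (fun n : ℕ => localEnt (box d n) ν μ' / ((box d n).card : ℝ)) Filter.atTop
section Aux
set_option linter.unusedSectionVars false
variable {d : ℕ} {S : Type*} [Fintype S] [Nonempty S] [MeasurableSpace S]
  [MeasurableSingletonClass S]

/-- Restriction of a configuration to `Λ`. -/
def restr (Λ : Finset (Site d)) (σ : Conf d S) : ↥Λ → S := fun j => σ j.1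

lemma measurable_restr (Λ : Finset (Site d)) : Measurable (restr (S := S) Λ) :=
  measurable_pi_lambda _ fun j => measurable_pi_apply j.1

lemma cyl_eq_preimage (Λ : Finset (Site d)) (a : ↥Λ → S) :
    cyl Λ a = restr Λ ⁻¹' {a} := by
  ext σ
  simp only [cyl, Set.mem_setOf_eq, Set.mem_preimage, Set.mem_singleton_iff]
  constructor
  · intro h; funext j; exact h j
  · intro h j; exact congrFun h j

lemma measurableSet_cyl (Λ : Finset (Site d)) (a : ↥Λ → S) :
    MeasurableSet (cyl Λ a) := by
  rw [cyl_eq_preimage]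
  exact measurable_restr Λ (measurableSet_singleton a)

lemma restr_fill (Λ : Finset (Site d)) (b : ↥Λ → S) (τ : Conf d S) :
    restr Λ (fill Λ b τ) = b := by
  funext j; simp [restr, fill, j.2]

/-- Decomposition of the integral of a `Λ`-local function into cylinder contributions. -/
lemma lintegral_local (Λ : Finset (Site d)) (ρ : Measure (Conf d S))
    (f : Conf d S → ℝ≥0∞) (τ₀ : Conf d S)
    (hf : ∀ η η' : Conf d S, (∀ j ∈ Λ, η j = η' j) → f η = f η') :
    ∫⁻ η, f η ∂ρ = ∑ b : ↥Λ → S, f (fill Λ b τ₀) * ρ (cyl Λ b) := by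
  have hfun : ∀ η, f η = f (fill Λ (restr Λ η) τ₀) := by
    intro η
    apply hf
    intro j hj
    simp [fill, restr, hj]
  calc ∫⁻ η, f η ∂ρ = ∫⁻ η, (fun b => f (fill Λ b τ₀)) (restr Λ η) ∂ρ := by
        congr 1; funext η; exact hfun η
    _ = ∫⁻ b, f (fill Λ b τ₀) ∂(ρ.map (restr Λ)) :=
        (lintegral_map (f := fun b => f (fill Λ b τ₀)) (measurable_of_countable _) (measurable_restr Λ)).symm
    _ = ∑ b : ↥Λ → S, f (fill Λ b τ₀) * (ρ.map (restr Λ)) {b} := lintegral_fintype _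
    _ = ∑ b : ↥Λ → S, f (fill Λ b τ₀) * ρ (cyl Λ b) := by
        refine Finset.sum_congr rfl fun b _ => ?_
        rw [Measure.map_apply (measurable_restr Λ) (measurableSet_singleton b),
          ← cyl_eq_preimage]

lemma sum_cyl (Λ : Finset (Site d)) (ρ : Measure (Conf d S)) [IsProbabilityMeasure ρ] :
    ∑ b : ↥Λ → S, ρ (cyl Λ b) = 1 := by
  have := lintegral_local Λ ρ (fun _ => 1) Classical.ofNonempty (fun _ _ _ => rfl)
  simpa using this.symm

end Aux
section Alg

open Real

/-- The log-sum inequality. -/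
lemma logsum {B : Type*} [Fintype B] [Nonempty B] (x y : B → ℝ)
    (hx : ∀ b, 0 ≤ x b) (hy : ∀ b, 0 < y b) :
    (∑ b, x b) * Real.log ((∑ b, x b) / (∑ b, y b)) ≤
      ∑ b, x b * Real.log (x b / y b) := by
  set Y := ∑ b, y b with hY
  have hYpos : 0 < Y := Finset.sum_pos (fun b _ => hy b) Finset.univ_nonempty
  have hw0 : ∀ b ∈ Finset.univ, (0:ℝ) ≤ y b / Y := fun b _ => div_nonneg (hy b).le hYpos.le
  have hw1 : ∑ b, y b / Y = 1 := by
    rw [← Finset.sum_div]; exact div_self hYpos.ne'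
  have hmem : ∀ b ∈ Finset.univ, x b / y b ∈ Set.Ici (0:ℝ) :=
    fun b _ => div_nonneg (hx b) (hy b).le
  have jensen := Real.convexOn_mul_log.map_sum_le hw0 hw1 hmem
  have hlhs : ∑ b, (y b / Y) • (x b / y b) = (∑ b, x b) / Y := by
    rw [Finset.sum_div]
    refine Finset.sum_congr rfl fun b _ => ?_
    have h1 := (hy b).ne'
    have h2 := hYpos.ne'
    rw [smul_eq_mul]
    field_simp
  have hrhs : ∀ b, (y b / Y) • ((x b / y b) * Real.log (x b / y b))
      = (x b * Real.log (x b / y b)) / Y := by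
    intro b
    have h1 := (hy b).ne'
    have h2 := hYpos.ne'
    rw [smul_eq_mul]
    field_simp
  rw [hlhs] at jensen
  have jensen2 : ((∑ b, x b) / Y) * Real.log ((∑ b, x b) / Y)
      ≤ (∑ b, x b * Real.log (x b / y b)) / Y := by
    refine jensen.trans_eq ?_
    rw [Finset.sum_div]
    exact Finset.sum_congr rfl fun b _ => hrhs b
  have := mul_le_mul_of_nonneg_right jensen2 hYpos.le
  calc (∑ b, x b) * Real.log ((∑ b, x b) / Y)
      = ((∑ b, x b) / Y) * Real.log ((∑ b, x b) / Y) * Y := by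
        have h2 := hYpos.ne'
        field_simp
    _ ≤ (∑ b, x b * Real.log (x b / y b)) / Y * Y := this
    _ = ∑ b, x b * Real.log (x b / y b) := div_mul_cancel₀ _ hYpos.ne'

/-- Data processing inequality for finite stochastic matrices. -/
lemma dpi {B A : Type*} [Fintype B] [Fintype A] [Nonempty B]
    (u v : B → ℝ) (q : B → A → ℝ)
    (hu : ∀ b, 0 ≤ u b) (hv : ∀ b, 0 < v b) (hq : ∀ b a, 0 < q b a)
    (hrow : ∀ b, ∑ a, q b a = 1) :
    ∑ a, (∑ b, u b * q b a) * Real.log ((∑ b, u b * q b a) / (∑ b, v b * q b a))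
      ≤ ∑ b, u b * Real.log (u b / v b) := by
  have key : ∀ a, (∑ b, u b * q b a) *
      Real.log ((∑ b, u b * q b a) / (∑ b, v b * q b a))
      ≤ ∑ b, (u b * Real.log (u b / v b)) * q b a := by
    intro a
    have h := logsum (fun b => u b * q b a) (fun b => v b * q b a)
      (fun b => mul_nonneg (hu b) (hq b a).le)
      (fun b => mul_pos (hv b) (hq b a))
    refine h.trans_eq (Finset.sum_congr rfl fun b _ => ?_)
    rcases eq_or_lt_of_le (hu b) with h0 | h0
    · simp [← h0]
    · rw [mul_div_mul_right _ _ (hq b a).ne']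
      ring
  calc ∑ a, (∑ b, u b * q b a) *
      Real.log ((∑ b, u b * q b a) / (∑ b, v b * q b a))
      ≤ ∑ a, ∑ b, (u b * Real.log (u b / v b)) * q b a :=
        Finset.sum_le_sum fun a _ => key a
    _ = ∑ b, (u b * Real.log (u b / v b)) * ∑ a, q b a := by
        rw [Finset.sum_comm]
        exact Finset.sum_congr rfl fun b _ => (Finset.mul_sum _ _ _).symm
    _ = ∑ b, u b * Real.log (u b / v b) := by
        refine Finset.sum_congr rfl fun b _ => ?_
        rw [hrow b, mul_one]

/-- Gibbs' inequality (nonnegativity of relative entropy). -/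
lemma kl_nonneg {A : Type*} [Fintype A] (w v : A → ℝ)
    (hw : ∀ a, 0 ≤ w a) (hv : ∀ a, 0 < v a) (hsum : ∑ a, v a ≤ ∑ a, w a) :
    0 ≤ ∑ a, w a * Real.log (w a / v a) := by
  have key : ∀ a, w a - v a ≤ w a * Real.log (w a / v a) := by
    intro a
    rcases eq_or_lt_of_le (hw a) with h0 | h0
    · rw [← h0]; simp; linarith [(hv a).le]
    · have h1 : Real.log (v a / w a) ≤ v a / w a - 1 :=
        Real.log_le_sub_one_of_pos (div_pos (hv a) h0)
      have h2 : Real.log (w a / v a) = - Real.log (v a / w a) := by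
        rw [← Real.log_inv]
        congr 1
        rw [inv_div]
      have h3 : 1 - v a / w a ≤ Real.log (w a / v a) := by rw [h2]; linarith
      have := mul_le_mul_of_nonneg_left h3 h0.le
      calc w a - v a = w a * (1 - v a / w a) := by field_simp
        _ ≤ w a * Real.log (w a / v a) := this
  calc (0:ℝ) = ∑ a, w a - ∑ a, v a + (∑ a, v a - ∑ a, w a) := by ring
    _ ≤ ∑ a, w a - ∑ a, v a := by linarith
    _ = ∑ a, (w a - v a) := (Finset.sum_sub_distrib _ _).symm
    _ ≤ ∑ a, w a * Real.log (w a / v a) := Finset.sum_le_sum fun a _ => key a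

/-- Upper bound for relative entropy when the second argument is bounded below. -/
lemma kl_upper {A : Type*} [Fintype A] (w v : A → ℝ) (c : ℝ)
    (hw0 : ∀ a, 0 ≤ w a) (hw1 : ∀ a, w a ≤ 1) (hc : 0 < c)
    (hv : ∀ a, c ≤ v a) (hsum : ∑ a, w a = 1) :
    ∑ a, w a * Real.log (w a / v a) ≤ - Real.log c := by
  have key : ∀ a, w a * Real.log (w a / v a) ≤ w a * (- Real.log c) := by
    intro a
    rcases eq_or_lt_of_le (hw0 a) with h0 | h0
    · rw [← h0]; simp
    · refine mul_le_mul_of_nonneg_left ?_ h0.le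
      have hva : 0 < v a := lt_of_lt_of_le hc (hv a)
      rw [Real.log_div h0.ne' hva.ne']
      have h1 : Real.log (w a) ≤ 0 := Real.log_nonpos (hw0 a) (hw1 a)
      have h2 : Real.log c ≤ Real.log (v a) := Real.log_le_log hc (hv a)
      linarith
  calc ∑ a, w a * Real.log (w a / v a) ≤ ∑ a, w a * (- Real.log c) :=
        Finset.sum_le_sum fun a _ => key a
    _ = - Real.log c := by rw [← Finset.sum_mul, hsum, one_mul]

end Alg
section Pot
set_option linter.unusedSectionVars false
variable {d : ℕ} {S : Type*} [Fintype S] [Nonempty S]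

/-- Sup-norm of a single potential term. -/
def gpot (Φ : Finset (Site d) → Conf d S → ℝ) (A : Finset (Site d)) : ℝ :=
  ⨆ σ : Conf d S, |Φ A σ|

/-- The total interaction strength at a single site. -/
def potK (Φ : Finset (Site d) → Conf d S → ℝ) : ℝ :=
  ∑' A : {A : Finset (Site d) // (0 : Site d) ∈ A}, gpot Φ A.1

lemma gpot_nonneg (Φ : Finset (Site d) → Conf d S → ℝ) (A : Finset (Site d)) :
    0 ≤ gpot Φ A :=
  Real.iSup_nonneg fun _ => abs_nonneg _

lemma potK_nonneg (Φ : Finset (Site d) → Conf d S → ℝ) : 0 ≤ potK Φ :=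
  tsum_nonneg fun A => gpot_nonneg Φ A.1

lemma abs_le_gpot (Φ : Finset (Site d) → Conf d S → ℝ)
    (hΦloc : ∀ (Λ : Finset (Site d)) (σ σ' : Conf d S),
      (∀ j ∈ Λ, σ j = σ' j) → Φ Λ σ = Φ Λ σ')
    (A : Finset (Site d)) (σ : Conf d S) : |Φ A σ| ≤ gpot Φ A := by
  have τ₀ : Conf d S := Classical.ofNonempty
  have hbdd : BddAbove (Set.range fun σ : Conf d S => |Φ A σ|) := by
    have hsub : (Set.range fun σ : Conf d S => |Φ A σ|) ⊆
        (fun b : ↥A → S => |Φ A (fill A b τ₀)|) '' Set.univ := by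
      rintro x ⟨σ, rfl⟩
      refine ⟨restr A σ, Set.mem_univ _, ?_⟩
      show |Φ A (fill A (restr A σ) τ₀)| = |Φ A σ|
      rw [hΦloc A (fill A (restr A σ) τ₀) σ (fun j hj => by simp [fill, restr, hj])]
    exact BddAbove.mono hsub ((Set.finite_univ.image _).bddAbove)
  exact le_ciSup hbdd σ

lemma shift_surjective (i : Site d) : Function.Surjective (shift (S := S) i) := by
  intro σ
  refine ⟨shift (-i) σ, ?_⟩
  funext j
  show σ (-i + (i + j)) = σ j
  rw [neg_add_cancel_left]

lemma gpot_shift (Φ : Finset (Site d) → Conf d S → ℝ)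
    (hΦsh : ∀ (i : Site d) (Λ : Finset (Site d)) (σ : Conf d S),
      Φ (Λ.image (· + i)) σ = Φ Λ (shift i σ))
    (i : Site d) (A : Finset (Site d)) : gpot Φ (A.image (· + i)) = gpot Φ A := by
  unfold gpot
  have h1 : (fun σ : Conf d S => |Φ (A.image (· + i)) σ|)
      = (fun σ : Conf d S => |Φ A σ|) ∘ shift i := by
    funext σ; simp only [Function.comp_apply, hΦsh i A σ]
  rw [iSup, iSup, h1, Function.Surjective.range_comp (shift_surjective i)]

/-- The bijection `A ↦ A + i` between sets containing `0` and sets containing `i`. -/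
def shiftSets (i : Site d) :
    {A : Finset (Site d) // (0 : Site d) ∈ A} ≃ {A : Finset (Site d) // i ∈ A} where
  toFun A := ⟨A.1.image (· + i), Finset.mem_image.mpr ⟨0, A.2, zero_add i⟩⟩
  invFun A := ⟨A.1.image (· + (-i)), Finset.mem_image.mpr ⟨i, A.2, add_neg_cancel i⟩⟩
  left_inv A := by
    ext1
    simp only [Finset.image_image]
    rw [show ((· + (-i)) ∘ (· + i)) = id by funext a; simp, Finset.image_id]
  right_inv A := by
    ext1
    simp only [Finset.image_image]
    rw [show ((· + i) ∘ (· + (-i))) = id by funext a; simp, Finset.image_id]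

lemma summable_gpot_mem (Φ : Finset (Site d) → Conf d S → ℝ) (hΦ : IsPotential Φ)
    (i : Site d) :
    Summable (fun A : {A : Finset (Site d) // i ∈ A} => gpot Φ A.1) ∧
    ∑' A : {A : Finset (Site d) // i ∈ A}, gpot Φ A.1 = potK Φ := by
  have hcomp : ∀ A : {A : Finset (Site d) // (0 : Site d) ∈ A},
      gpot Φ ((shiftSets i) A).1 = gpot Φ A.1 :=
    fun A => gpot_shift Φ hΦ.2.1 i A.1
  constructor
  · rw [← (shiftSets i).summable_iff]
    exact hΦ.2.2.congr fun A => (hcomp A).symm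
  · rw [← (shiftSets i).tsum_eq (fun A : {A : Finset (Site d) // i ∈ A} => gpot Φ A.1)]
    exact tsum_congr hcomp

lemma summable_gpot_inter (Φ : Finset (Site d) → Conf d S → ℝ) (hΦ : IsPotential Φ)
    (Λ : Finset (Site d)) :
    Summable (fun A : {A : Finset (Site d) // (A ∩ Λ).Nonempty} => gpot Φ A.1) ∧
    ∑' A : {A : Finset (Site d) // (A ∩ Λ).Nonempty}, gpot Φ A.1 ≤ Λ.card * potK Φ := by
  classical
  let F : Finset (Site d) → ℝ :=
    Set.indicator {A : Finset (Site d) | (A ∩ Λ).Nonempty} (gpot Φ)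
  let Fi : Site d → Finset (Site d) → ℝ :=
    fun i => Set.indicator {A : Finset (Site d) | i ∈ A} (gpot Φ)
  have hFi_nonneg : ∀ i A, 0 ≤ Fi i A :=
    fun i A => Set.indicator_nonneg (fun A _ => gpot_nonneg Φ A) A
  have hFi_summ : ∀ i, Summable (Fi i) := by
    intro i
    have := (summable_gpot_mem Φ hΦ i).1
    rw [← summable_subtype_iff_indicator (s := {A : Finset (Site d) | i ∈ A})]
    exact this
  have hFi_tsum : ∀ i, ∑' A, Fi i A = potK Φ := by
    intro i
    rw [← tsum_subtype {A : Finset (Site d) | i ∈ A} (gpot Φ)]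
    exact (summable_gpot_mem Φ hΦ i).2
  have hle : ∀ A, F A ≤ ∑ i ∈ Λ, Fi i A := by
    intro A
    by_cases h : (A ∩ Λ).Nonempty
    · have hmemF : A ∈ {A : Finset (Site d) | (A ∩ Λ).Nonempty} := h
      obtain ⟨i, hi⟩ := h
      have hiA : i ∈ A := (Finset.mem_inter.mp hi).1
      have hiΛ : i ∈ Λ := (Finset.mem_inter.mp hi).2
      have h1 : F A = gpot Φ A := Set.indicator_of_mem hmemF _
      have h2 : Fi i A = gpot Φ A :=
        Set.indicator_of_mem (show A ∈ {A : Finset (Site d) | i ∈ A} from hiA) _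
      rw [h1, ← h2]
      exact Finset.single_le_sum (fun j _ => hFi_nonneg j A) hiΛ
    · have h1 : F A = 0 := Set.indicator_of_notMem (show A ∉ {A : Finset (Site d) | (A ∩ Λ).Nonempty} from h) _
      rw [h1]
      exact Finset.sum_nonneg fun i _ => hFi_nonneg i A
  have hF_nonneg : ∀ A, 0 ≤ F A :=
    fun A => Set.indicator_nonneg (fun A _ => gpot_nonneg Φ A) A
  have hsum_sum : Summable (fun A => ∑ i ∈ Λ, Fi i A) :=
    summable_sum fun i _ => hFi_summ i
  have hF_summ : Summable F := Summable.of_nonneg_of_le hF_nonneg hle hsum_sum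
  constructor
  · rw [show (fun A : {A : Finset (Site d) // (A ∩ Λ).Nonempty} => gpot Φ A.1)
        = (gpot Φ) ∘ (Subtype.val : {A : Finset (Site d) // (A ∩ Λ).Nonempty} →
            Finset (Site d)) by rfl]
    exact (summable_subtype_iff_indicator
      (s := {A : Finset (Site d) | (A ∩ Λ).Nonempty}) (f := gpot Φ)).mpr hF_summ
  · calc ∑' A : {A : Finset (Site d) // (A ∩ Λ).Nonempty}, gpot Φ A.1
        = ∑' A, F A := tsum_subtype _ _
      _ ≤ ∑' A, ∑ i ∈ Λ, Fi i A := Summable.tsum_le_tsum hle hF_summ hsum_sum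
      _ = ∑ i ∈ Λ, ∑' A, Fi i A := Summable.tsum_finsetSum fun i _ => hFi_summ i
      _ = ∑ i ∈ Λ, potK Φ := Finset.sum_congr rfl fun i _ => hFi_tsum i
      _ = Λ.card * potK Φ := by rw [Finset.sum_const, nsmul_eq_mul]

lemma abs_ham_le (Φ : Finset (Site d) → Conf d S → ℝ) (hΦ : IsPotential Φ)
    (Λ : Finset (Site d)) (a : ↥Λ → S) (τ : Conf d S) :
    |ham Φ Λ a τ| ≤ Λ.card * potK Φ := by
  have habs : ∀ A : {A : Finset (Site d) // (A ∩ Λ).Nonempty},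
      |Φ A.1 (fill Λ a τ)| ≤ gpot Φ A.1 :=
    fun A => abs_le_gpot Φ hΦ.1 A.1 _
  have hsummg := (summable_gpot_inter Φ hΦ Λ).1
  have habs_summ : Summable (fun A : {A : Finset (Site d) // (A ∩ Λ).Nonempty} =>
      |Φ A.1 (fill Λ a τ)|) :=
    Summable.of_nonneg_of_le (fun A => abs_nonneg _) habs hsummg
  calc |ham Φ Λ a τ|
      ≤ ∑' A : {A : Finset (Site d) // (A ∩ Λ).Nonempty}, |Φ A.1 (fill Λ a τ)| := by
        simpa [Real.norm_eq_abs, ham] using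
          norm_tsum_le_tsum_norm (f := fun A : {A : Finset (Site d) // (A ∩ Λ).Nonempty} =>
            Φ A.1 (fill Λ a τ)) (by simpa [Real.norm_eq_abs] using habs_summ)
    _ ≤ ∑' A : {A : Finset (Site d) // (A ∩ Λ).Nonempty}, gpot Φ A.1 :=
        Summable.tsum_le_tsum habs habs_summ hsummg
    _ ≤ Λ.card * potK Φ := (summable_gpot_inter Φ hΦ Λ).2

lemma gibbsW_lower [MeasurableSpace S] (Φ : Finset (Site d) → Conf d S → ℝ)
    (hΦ : IsPotential Φ) (Λ : Finset (Site d)) (a : ↥Λ → S) (τ : Conf d S) :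
    Real.exp (-(Λ.card * potK Φ)) /
      (Fintype.card (↥Λ → S) * Real.exp (Λ.card * potK Φ)) ≤ gibbsW Φ Λ a τ := by
  set B := (Λ.card : ℝ) * potK Φ with hB
  have hham : ∀ b : ↥Λ → S, |ham Φ Λ b τ| ≤ B := fun b => abs_ham_le Φ hΦ Λ b τ
  have hnum : Real.exp (-B) ≤ Real.exp (-(ham Φ Λ a τ)) := by
    apply Real.exp_le_exp.mpr
    have := (abs_le.mp (hham a)).2
    linarith
  have hden_pos : 0 < ∑ b : ↥Λ → S, Real.exp (-(ham Φ Λ b τ)) :=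
    Finset.sum_pos (fun b _ => Real.exp_pos _) Finset.univ_nonempty
  have hden : ∑ b : ↥Λ → S, Real.exp (-(ham Φ Λ b τ))
      ≤ Fintype.card (↥Λ → S) * Real.exp B := by
    calc ∑ b : ↥Λ → S, Real.exp (-(ham Φ Λ b τ)) ≤ ∑ _b : ↥Λ → S, Real.exp B := by
          refine Finset.sum_le_sum fun b _ => Real.exp_le_exp.mpr ?_
          have := (abs_le.mp (hham b)).1
          linarith
      _ = Fintype.card (↥Λ → S) * Real.exp B := by
          rw [Finset.sum_const, nsmul_eq_mul, Finset.card_univ]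
  exact div_le_div₀ (Real.exp_pos _).le hnum hden_pos hden

end Pot
section Meas
set_option linter.unusedSectionVars false
variable {d : ℕ} {S : Type*} [Fintype S] [Nonempty S] [MeasurableSpace S]
  [MeasurableSingletonClass S]

/-- Decomposition of the cylinder probabilities of `ρ.bind P` for a local kernel. -/
lemma bind_cyl (P : ProbabilityTheory.Kernel (Conf d S) (Conf d S))
    (Λ Λ' : Finset (Site d)) (τ₀ : Conf d S) (a : ↥Λ → S)
    (hlocal : ∀ η η' : Conf d S, (∀ j ∈ Λ', η j = η' j) →
       P η (cyl Λ a) = P η' (cyl Λ a))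
    (ρ : Measure (Conf d S)) :
    (ρ.bind ⇑P) (cyl Λ a)
      = ∑ b : ↥Λ' → S, P (fill Λ' b τ₀) (cyl Λ a) * ρ (cyl Λ' b) := by
  rw [Measure.bind_apply (measurableSet_cyl Λ a) P.measurable.aemeasurable]
  exact lintegral_local Λ' ρ _ τ₀ hlocal

/-- Positivity (with a quantitative lower bound) of cylinder probabilities of a Gibbs
measure. -/
lemma mu_cyl_lower (Φ : Finset (Site d) → Conf d S → ℝ) (hΦ : IsPotential Φ)
    (μ : Measure (Conf d S)) [IsProbabilityMeasure μ] (hGibbs : IsGibbs Φ μ)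
    (Λ : Finset (Site d)) (a : ↥Λ → S) :
    ENNReal.ofReal (Real.exp (-(Λ.card * potK Φ)) /
      (Fintype.card (↥Λ → S) * Real.exp (Λ.card * potK Φ))) ≤ μ (cyl Λ a) := by
  have h := hGibbs Λ a Set.univ (@MeasurableSet.univ _ (outer Λ))
  rw [Set.inter_univ, Measure.restrict_univ] at h
  rw [h]
  calc ENNReal.ofReal (Real.exp (-(Λ.card * potK Φ)) /
        (Fintype.card (↥Λ → S) * Real.exp (Λ.card * potK Φ)))
      = ∫⁻ _τ, ENNReal.ofReal (Real.exp (-(Λ.card * potK Φ)) /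
        (Fintype.card (↥Λ → S) * Real.exp (Λ.card * potK Φ))) ∂μ := by
        rw [lintegral_const, measure_univ, mul_one]
    _ ≤ ∫⁻ τ, ENNReal.ofReal (gibbsW Φ Λ a τ) ∂μ :=
        lintegral_mono fun τ => ENNReal.ofReal_le_ofReal (gibbsW_lower Φ hΦ Λ a τ)

/-- Real-valued version: cylinder probabilities of a Gibbs measure are bounded below. -/
lemma mu_cyl_lower_real (Φ : Finset (Site d) → Conf d S → ℝ) (hΦ : IsPotential Φ)
    (μ : Measure (Conf d S)) [IsProbabilityMeasure μ] (hGibbs : IsGibbs Φ μ)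
    (Λ : Finset (Site d)) (a : ↥Λ → S) :
    Real.exp (-(Λ.card * potK Φ)) /
      (Fintype.card (↥Λ → S) * Real.exp (Λ.card * potK Φ)) ≤ (μ (cyl Λ a)).toReal := by
  have h := mu_cyl_lower Φ hΦ μ hGibbs Λ a
  have hfin : μ (cyl Λ a) ≠ ⊤ := measure_ne_top μ _
  rw [← ENNReal.ofReal_le_iff_le_toReal hfin]
  exact h

lemma cylLB_pos (Φ : Finset (Site d) → Conf d S → ℝ) (Λ : Finset (Site d)) :
    0 < Real.exp (-(Λ.card * potK Φ)) /
      (Fintype.card (↥Λ → S) * Real.exp (Λ.card * potK Φ)) := by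
  apply div_pos (Real.exp_pos _)
  apply mul_pos _ (Real.exp_pos _)
  exact_mod_cast Fintype.card_pos

/-- `- log` of the cylinder lower bound. -/
lemma neg_log_cylLB (Φ : Finset (Site d) → Conf d S → ℝ) (Λ : Finset (Site d)) :
    - Real.log (Real.exp (-(Λ.card * potK Φ)) /
      (Fintype.card (↥Λ → S) * Real.exp (Λ.card * potK Φ)))
      = Λ.card * (2 * potK Φ + Real.log (Fintype.card S)) := by
  have hN : (0:ℝ) < (Fintype.card (↥Λ → S) : ℝ) := by exact_mod_cast Fintype.card_pos
  rw [Real.log_div (Real.exp_pos _).ne' (mul_pos hN (Real.exp_pos _)).ne',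
    Real.log_exp, Real.log_mul hN.ne' (Real.exp_pos _).ne', Real.log_exp]
  have hcard : (Fintype.card (↥Λ → S) : ℝ) = (Fintype.card S : ℝ) ^ Λ.card := by
    rw [Fintype.card_fun, Fintype.card_coe]
    push_cast
    ring
  rw [hcard, Real.log_pow]
  ring

/-- Sum of real cylinder probabilities is 1. -/
lemma sum_cyl_real (Λ : Finset (Site d)) (ρ : Measure (Conf d S))
    [IsProbabilityMeasure ρ] :
    ∑ b : ↥Λ → S, (ρ (cyl Λ b)).toReal = 1 := by
  rw [← ENNReal.toReal_sum (fun b _ => measure_ne_top ρ _), sum_cyl Λ ρ,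
    ENNReal.toReal_one]

end Meas
section Ent
set_option linter.unusedSectionVars false
variable {d : ℕ} {S : Type*} [Fintype S] [Nonempty S] [MeasurableSpace S]
  [MeasurableSingletonClass S]

lemma localEnt_nonneg (Λ : Finset (Site d)) (ρ μ' : Measure (Conf d S))
    [IsProbabilityMeasure ρ] [IsProbabilityMeasure μ']
    (hpos : ∀ a : ↥Λ → S, 0 < (μ' (cyl Λ a)).toReal) :
    0 ≤ localEnt Λ ρ μ' := by
  refine kl_nonneg _ _ (fun a => ENNReal.toReal_nonneg) hpos ?_
  rw [sum_cyl_real Λ ρ, sum_cyl_real Λ μ']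

lemma localEnt_upper (Λ : Finset (Site d)) (ρ μ' : Measure (Conf d S))
    [IsProbabilityMeasure ρ] [IsProbabilityMeasure μ'] (c : ℝ) (hc : 0 < c)
    (hv : ∀ a : ↥Λ → S, c ≤ (μ' (cyl Λ a)).toReal) :
    localEnt Λ ρ μ' ≤ - Real.log c := by
  refine kl_upper _ _ c (fun a => ENNReal.toReal_nonneg) (fun a => ?_) hc hv
    (sum_cyl_real Λ ρ)
  have := prob_le_one (μ := ρ) (s := cyl Λ a)
  calc (ρ (cyl Λ a)).toReal ≤ (1 : ℝ≥0∞).toReal :=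
        ENNReal.toReal_mono ENNReal.one_ne_top this
    _ = 1 := ENNReal.toReal_one

/-- The key step: local relative entropy after one PCA step is dominated by local relative
entropy on the enlarged window. -/
lemma step_localEnt (P : ProbabilityTheory.Kernel (Conf d S) (Conf d S))
    [ProbabilityTheory.IsMarkovKernel P]
    (p : Site d → S → Conf d S → ℝ≥0∞)
    (hPCA : IsPCA P p) (hsh : ShiftInvPCA p) (hnd : NonDegPCA p)
    (Λ Λ' : Finset (Site d))
    (hlocal : ∀ (a : ↥Λ → S) (η η' : Conf d S), (∀ j ∈ Λ', η j = η' j) →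
       P η (cyl Λ a) = P η' (cyl Λ a))
    (μ : Measure (Conf d S)) [IsProbabilityMeasure μ] (hstat : μ.bind ⇑P = μ)
    (hpos : ∀ b : ↥Λ' → S, 0 < (μ (cyl Λ' b)).toReal)
    (ν : Measure (Conf d S)) [IsProbabilityMeasure ν] :
    localEnt Λ (ν.bind ⇑P) μ ≤ localEnt Λ' ν μ := by
  classical
  set τ₀ : Conf d S := Classical.ofNonempty with hτ₀
  set Q : (↥Λ' → S) → (↥Λ → S) → ℝ≥0∞ :=
    fun b a => P (fill Λ' b τ₀) (cyl Λ a) with hQ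
  have hQ_le : ∀ b a, Q b a ≤ 1 := fun b a => prob_le_one
  have hQ_top : ∀ b a, Q b a ≠ ⊤ := fun b a => (lt_of_le_of_lt (hQ_le b a)
    ENNReal.one_lt_top).ne
  set q : (↥Λ' → S) → (↥Λ → S) → ℝ := fun b a => (Q b a).toReal with hq
  set u : (↥Λ' → S) → ℝ := fun b => (ν (cyl Λ' b)).toReal with hu
  set v : (↥Λ' → S) → ℝ := fun b => (μ (cyl Λ' b)).toReal with hv
  have hq_pos : ∀ b a, 0 < q b a := by
    intro b a
    refine ENNReal.toReal_pos ?_ (hQ_top b a)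
    show (P (fill Λ' b τ₀)) (cyl Λ a) ≠ 0
    rw [hPCA (fill Λ' b τ₀) Λ a]
    rw [Finset.prod_ne_zero_iff]
    intro j _
    rw [hsh j.1 (a j) (fill Λ' b τ₀)]
    exact (hnd (a j) _).ne'
  have hrow : ∀ b, ∑ a : ↥Λ → S, q b a = 1 := by
    intro b
    rw [hq]
    rw [← ENNReal.toReal_sum (fun a _ => hQ_top b a)]
    rw [hQ]
    rw [sum_cyl Λ (P (fill Λ' b τ₀)), ENNReal.toReal_one]
  have key : ∀ (ρ : Measure (Conf d S)), (∀ b : ↥Λ' → S, ρ (cyl Λ' b) ≠ ⊤) →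
      ∀ a : ↥Λ → S,
      ((ρ.bind ⇑P) (cyl Λ a)).toReal = ∑ b, (ρ (cyl Λ' b)).toReal * q b a := by
    intro ρ hρ a
    rw [bind_cyl P Λ Λ' τ₀ a (hlocal a) ρ]
    rw [ENNReal.toReal_sum (fun b _ => ENNReal.mul_ne_top (hQ_top b a) (hρ b))]
    refine Finset.sum_congr rfl fun b _ => ?_
    rw [ENNReal.toReal_mul, mul_comm]
  have keyμ : ∀ a : ↥Λ → S, (μ (cyl Λ a)).toReal = ∑ b, v b * q b a := by
    intro a
    conv_lhs => rw [← hstat]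
    exact key μ (fun b => measure_ne_top μ _) a
  have keyν : ∀ a : ↥Λ → S, ((ν.bind ⇑P) (cyl Λ a)).toReal = ∑ b, u b * q b a :=
    key ν (fun b => measure_ne_top ν _)
  have hrw : localEnt Λ (ν.bind ⇑P) μ
      = ∑ a : ↥Λ → S, (∑ b, u b * q b a) * Real.log ((∑ b, u b * q b a) /
          (∑ b, v b * q b a)) := by
    unfold localEnt
    exact Finset.sum_congr rfl fun a _ => by rw [keyν a, keyμ a]
  rw [hrw]
  exact dpi u v q (fun b => ENNReal.toReal_nonneg) hpos hq_pos hrow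

end Ent
section Box

lemma card_box (d n : ℕ) : (box d n).card = (2*n+1)^d := by
  classical
  rw [box, Fintype.card_piFinset]
  have h : (Finset.Icc (-(n:ℤ)) (n:ℤ)).card = 2*n+1 := by
    rw [Int.card_Icc]
    omega
  simp [h]

lemma mem_box_add {d : ℕ} (n m : ℕ) (j k : Site d) (hj : j ∈ box d n)
    (hk : ∀ t, (k t).natAbs ≤ m) : j + k ∈ box d (n + m) := by
  rw [box, Fintype.mem_piFinset] at hj ⊢
  intro t
  have h1 := hj t
  rw [Finset.mem_Icc] at h1 ⊢
  have h2 := hk t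
  have h3 : (j + k) t = j t + k t := rfl
  rw [h3]
  omega

end Box

/-- Let `P` be a shift-invariant, local, non-degenerate PCA on `S^{ℤ^d}`
and let `μ` be a stationary measure for `P` which is a shift-invariant Gibbs measure for a
shift-invariant potential `Φ`. Then for every shift-invariant probability measure `ν`,
the specific relative entropy does not increase under the dynamics:
`h(Pν|μ) ≤ h(ν|μ)`. -/
theorem stmt1 {d : ℕ} (hd : 0 < d)
    {S : Type*} [Fintype S] [Nonempty S] [MeasurableSpace S] [MeasurableSingletonClass S]
    (P : ProbabilityTheory.Kernel (Conf d S) (Conf d S)) [ProbabilityTheory.IsMarkovKernel P]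
    (p : Site d → S → Conf d S → ℝ≥0∞)
    (hPCA : IsPCA P p) (hsh : ShiftInvPCA p) (hloc : LocalPCA p) (hnd : NonDegPCA p)
    (Φ : Finset (Site d) → Conf d S → ℝ) (hΦ : IsPotential Φ)
    (μ : Measure (Conf d S)) [IsProbabilityMeasure μ]
    (hstat : μ.bind ⇑P = μ) (hμsh : ShiftInvMeas μ) (hGibbs : IsGibbs Φ μ)
    (ν : Measure (Conf d S)) [IsProbabilityMeasure ν] (hνsh : ShiftInvMeas ν) :
    specEnt (ν.bind ⇑P) μ ≤ specEnt ν μ := by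
  classical
  obtain ⟨Λ₀, hΛ₀⟩ := hloc
  -- size of the locality window
  set m : ℕ := Λ₀.sup (fun j => Finset.univ.sup (fun t : Fin d => (j t).natAbs)) with hm
  have hΛ₀m : ∀ j ∈ Λ₀, ∀ t, (j t).natAbs ≤ m := by
    intro j hj t
    calc (j t).natAbs ≤ Finset.univ.sup (fun t : Fin d => (j t).natAbs) :=
          Finset.le_sup (f := fun t : Fin d => (j t).natAbs) (Finset.mem_univ t)
      _ ≤ m := Finset.le_sup
          (f := fun j : Site d => Finset.univ.sup (fun t : Fin d => (j t).natAbs)) hj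
  clear_value m
  -- locality of the cylinder probabilities of the kernel
  have hlocal : ∀ (n : ℕ) (a : ↥(box d n) → S) (η η' : Conf d S),
      (∀ j ∈ box d (n+m), η j = η' j) →
      P η (cyl (box d n) a) = P η' (cyl (box d n) a) := by
    intro n a η η' hagree
    rw [hPCA, hPCA]
    refine Finset.prod_congr rfl fun j _ => ?_
    rw [hsh j.1 (a j) η, hsh j.1 (a j) η']
    refine hΛ₀ (a j) _ _ fun k hk => ?_
    show η (j.1 + k) = η' (j.1 + k)
    exact hagree _ (mem_box_add n m j.1 k j.2 (hΛ₀m k hk))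
  -- constants
  have hK0 : 0 ≤ potK Φ := potK_nonneg Φ
  set C : ℝ := 2 * potK Φ + Real.log (Fintype.card S) with hCdef
  have hC0 : 0 ≤ C := by
    have h1 : (1:ℝ) ≤ (Fintype.card S : ℝ) := by exact_mod_cast Fintype.card_pos
    have := Real.log_nonneg h1
    rw [hCdef]; linarith
  -- positivity of cylinder probabilities of μ
  have hμpos : ∀ (Λ : Finset (Site d)) (a : ↥Λ → S), 0 < (μ (cyl Λ a)).toReal :=
    fun Λ a => lt_of_lt_of_le (cylLB_pos Φ Λ) (mu_cyl_lower_real Φ hΦ μ hGibbs Λ a)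
  haveI hνP : IsProbabilityMeasure (ν.bind ⇑P) := by
    constructor
    rw [Measure.bind_apply MeasurableSet.univ P.measurable.aemeasurable]
    simp
  -- bounds on local entropies
  have hL0 : ∀ n : ℕ, 0 ≤ localEnt (box d n) ν μ :=
    fun n => localEnt_nonneg _ ν μ (hμpos _)
  have hM0 : ∀ n : ℕ, 0 ≤ localEnt (box d n) (ν.bind ⇑P) μ :=
    fun n => localEnt_nonneg _ _ μ (hμpos _)
  have hLC : ∀ n : ℕ, localEnt (box d n) ν μ ≤ ((box d n).card : ℝ) * C := by
    intro n
    have h1 := localEnt_upper (box d n) ν μ _ (cylLB_pos Φ (box d n))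
      (fun a => mu_cyl_lower_real Φ hΦ μ hGibbs (box d n) a)
    rw [neg_log_cylLB Φ (box d n)] at h1
    exact h1
  have hstep : ∀ n : ℕ, localEnt (box d n) (ν.bind ⇑P) μ ≤ localEnt (box d (n+m)) ν μ :=
    fun n => step_localEnt P p hPCA hsh hnd (box d n) (box d (n+m)) (hlocal n) μ hstat
      (fun b => hμpos _ b) ν
  -- the normalizing sequence
  have hcpos : ∀ n : ℕ, (0:ℝ) < ((box d n).card : ℝ) := by
    intro n
    have : 0 < (box d n).card := by
      rw [card_box]; positivity
    exact_mod_cast this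
  have hcmono : ∀ n : ℕ, ((box d n).card : ℝ) ≤ ((box d (n+m)).card : ℝ) := by
    intro n
    have : (box d n).card ≤ (box d (n+m)).card := by
      rw [card_box, card_box]
      apply Nat.pow_le_pow_left
      exact Nat.add_le_add_right (Nat.mul_le_mul_left 2 (Nat.le_add_right n m)) 1
    exact_mod_cast this
  have ha0 : ∀ n : ℕ, 0 ≤ localEnt (box d n) ν μ / ((box d n).card : ℝ) :=
    fun n => div_nonneg (hL0 n) (hcpos n).le
  have haC : ∀ n : ℕ, localEnt (box d n) ν μ / ((box d n).card : ℝ) ≤ C :=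
    fun n => (div_le_iff₀ (hcpos n)).mpr (by
      have := hLC n; linarith [this])
  -- key pointwise estimate
  have hratio : ∀ n : ℕ, localEnt (box d n) (ν.bind ⇑P) μ / ((box d n).card : ℝ)
      ≤ localEnt (box d (n+m)) ν μ / ((box d (n+m)).card : ℝ)
        + C * (((box d (n+m)).card : ℝ) / ((box d n).card : ℝ) - 1) := by
    intro n
    have h1 : localEnt (box d n) (ν.bind ⇑P) μ / ((box d n).card : ℝ)
        ≤ localEnt (box d (n+m)) ν μ / ((box d n).card : ℝ) := by
      gcongr
      exact hstep n
    have h2 : localEnt (box d (n+m)) ν μ / ((box d n).card : ℝ)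
        = (localEnt (box d (n+m)) ν μ / ((box d (n+m)).card : ℝ))
          * (((box d (n+m)).card : ℝ) / ((box d n).card : ℝ)) := by
      rw [div_mul_div_comm, mul_comm (localEnt (box d (n+m)) ν μ) _,
        mul_div_mul_left _ _ (hcpos (n+m)).ne']
    have hr1 : (1:ℝ) ≤ ((box d (n+m)).card : ℝ) / ((box d n).card : ℝ) :=
      (one_le_div (hcpos n)).mpr (hcmono n)
    have hx0 := ha0 (n+m)
    have hxC := haC (n+m)
    set x := localEnt (box d (n+m)) ν μ / ((box d (n+m)).card : ℝ)
    set r := ((box d (n+m)).card : ℝ) / ((box d n).card : ℝ)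
    calc localEnt (box d n) (ν.bind ⇑P) μ / ((box d n).card : ℝ)
        ≤ x * r := h1.trans_eq h2
      _ ≤ x + C * (r - 1) := by nlinarith
  -- the error term tends to zero
  have htend : Tendsto (fun n : ℕ =>
      C * (((box d (n+m)).card : ℝ) / ((box d n).card : ℝ) - 1)) atTop (nhds 0) := by
    have hden : Tendsto (fun n : ℕ => 2*(n:ℝ)+1) atTop atTop := by
      apply Filter.tendsto_atTop_add_const_right
      exact Tendsto.const_mul_atTop two_pos tendsto_natCast_atTop_atTop
    have hzero : Tendsto (fun n : ℕ => (2*(m:ℝ))/(2*(n:ℝ)+1)) atTop (nhds 0) :=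
      Tendsto.div_atTop tendsto_const_nhds hden
    have hone : Tendsto (fun n : ℕ => 1 + (2*(m:ℝ))/(2*(n:ℝ)+1)) atTop (nhds 1) := by
      have := tendsto_const_nhds (x := (1:ℝ)) (f := atTop (α := ℕ)) |>.add hzero
      simpa using this
    have hratio_eq : ∀ n : ℕ, ((box d (n+m)).card : ℝ) / ((box d n).card : ℝ)
        = (1 + (2*(m:ℝ))/(2*(n:ℝ)+1))^d := by
      intro n
      rw [card_box, card_box]
      push_cast
      rw [← div_pow]
      congr 1
      have hne : (2*(n:ℝ)+1) ≠ 0 := by positivity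
      field_simp
      ring
    have hpow : Tendsto (fun n : ℕ => (1 + (2*(m:ℝ))/(2*(n:ℝ)+1))^d) atTop (nhds 1) := by
      have := hone.pow d
      simpa using this
    have hfinal : Tendsto (fun n : ℕ =>
        ((box d (n+m)).card : ℝ) / ((box d n).card : ℝ)) atTop (nhds 1) := by
      refine hpow.congr fun n => (hratio_eq n).symm
    have := ((hfinal.sub_const 1).const_mul C)
    simpa using this
  -- conclusion via limsup manipulation
  unfold specEnt
  refine le_of_forall_pos_le_add ?_
  intro ε hε
  have hbdd : IsBoundedUnder (· ≤ ·) atTop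
      (fun n : ℕ => localEnt (box d n) ν μ / ((box d n).card : ℝ)) :=
    isBoundedUnder_of ⟨C, fun n => haC n⟩
  set L := limsup (fun n : ℕ => localEnt (box d n) ν μ / ((box d n).card : ℝ)) atTop with hL
  have h1 : ∀ᶠ n in atTop,
      localEnt (box d n) ν μ / ((box d n).card : ℝ) < L + ε/2 :=
    eventually_lt_of_limsup_lt (by linarith [half_pos hε]) hbdd
  have h1' : ∀ᶠ n in atTop,
      localEnt (box d (n+m)) ν μ / ((box d (n+m)).card : ℝ) < L + ε/2 := by
    obtain ⟨N, hN⟩ := eventually_atTop.mp h1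
    exact eventually_atTop.mpr ⟨N, fun n hn => hN (n+m) (le_trans hn (Nat.le_add_right n m))⟩
  have h2 : ∀ᶠ n in atTop,
      C * (((box d (n+m)).card : ℝ) / ((box d n).card : ℝ) - 1) ≤ ε/2 :=
    htend.eventually (eventually_le_nhds (half_pos hε))
  have h3 : ∀ᶠ n in atTop,
      localEnt (box d n) (ν.bind ⇑P) μ / ((box d n).card : ℝ) ≤ L + ε := by
    filter_upwards [h1', h2] with n hn1 hn2
    have := hratio n
    linarith
  have hcobdd : IsCoboundedUnder (· ≤ ·) atTop
      (fun n : ℕ => localEnt (box d n) (ν.bind ⇑P) μ / ((box d n).card : ℝ)) := by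
    have hb : IsBoundedUnder (· ≥ ·) atTop
        (fun n : ℕ => localEnt (box d n) (ν.bind ⇑P) μ / ((box d n).card : ℝ)) :=
      isBoundedUnder_of ⟨0, fun n => div_nonneg (hM0 n) (hcpos n).le⟩
    exact hb.isCoboundedUnder_flip
  exact limsup_le_of_le hcobdd h3

end
end PCAG
end

section
/- Let Λ ⊂ Z^d be finite and τ ∈ {−1,1}^{Z^d}. The finite-volume PCA with transition probability P_Λ^τ(σ|η) has a unique stationary measure, namely ν_Λ^τ(σ) = (W_Λ^τ)^{-1} ∏_{i∈Λ} e^{βhσ_i} · cosh(β Σ_{j∈Z^d} k(i−j) σ̃_j + βh) · e^{β σ_i Σ_{j∈Λ^c} k(i−j) τ_j}, where σ̃ = σ_Λ τ_{Λ^c} and W_Λ^τ is the normalization constant. Moreover, ν_Λ^τ is reversible for P_Λ^τ, i.e. detailed balance holds: P_Λ^τ(σ|η) ν_Λ^τ(η) = P_Λ^τ(η|σ) ν_Λ^τ(σ) for all σ, η ∈ {−1,1}^Λ. -/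
/-!
Writing `x_i(η) = β Σ_j k(i-j) η̃_j + βh`, the single-site law is
`p_i(s|η) = e^{s x_i(η)} / (2 cosh x_i(η))`, so the factor `cosh x_i(η)` in `ν_Λ^τ(η)` cancels and
`P_Λ^τ(σ|η) ν_Λ^τ(η)` is proportional to `exp H(σ, η)` with
`H(σ, η) = β Σ_{i,j∈Λ} k(i-j) σ_i η_j + β Σ_{i∈Λ} (Σ_{j∉Λ} k(i-j) τ_j + h)(σ_i + η_i)`.
Symmetry of `k` makes `H` symmetric, which is detailed balance; summing over `η` gives
stationarity. Since `P_Λ^τ > 0`, a stationary vector is determined by its total mass.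
-/

open MeasureTheory Filter

namespace PCA

noncomputable section

/-- Sites of the lattice `ℤ^d`. -/
abbrev Site (d : ℕ) := Fin d → ℤ

/-- Spin configurations on `ℤ^d` with spins in `{-1,1}` encoded by `Bool`. -/
abbrev Conf (d : ℕ) := Site d → Bool

/-- The real value of a spin: `true ↦ 1`, `false ↦ -1`. -/
def val (b : Bool) : ℝ := if b then 1 else -1

/-- Squared Euclidean norm of a site. -/
def normSq {d : ℕ} (i : Site d) : ℤ := ∑ t, (i t) ^ 2

/-- The local field `Σ_j k(i-j) η_j`. -/
def field {d : ℕ} (k : Site d → ℝ) (i : Site d) (η : Conf d) : ℝ :=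
  ∑' j : Site d, k (i - j) * val (η j)

/-- Single site updating probability
`p_i(s|η) = (1 + s tanh(β Σ_j k(i-j) η_j + β h))/2`. -/
def pval {d : ℕ} (β h : ℝ) (k : Site d → ℝ) (i : Site d) (s : Bool) (η : Conf d) : ℝ :=
  (1 + val s * Real.tanh (β * field k i η + β * h)) / 2

/-- The configuration equal to `a` on `Λ` and to `τ` outside `Λ`. -/
def fill {d : ℕ} (Λ : Finset (Site d)) (a : ↥Λ → Bool) (τ : Conf d) : Conf d :=
  fun j => if h : j ∈ Λ then a ⟨j, h⟩ else τ j

/-- Finite volume PCA transition probability with boundary condition `τ`: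
`P_Λ^τ(σ|η) = ∏_{i ∈ Λ} p_i(σ_i | η_Λ τ_{Λ^c})`. -/
def Pfin {d : ℕ} (β h : ℝ) (k : Site d → ℝ) (Λ : Finset (Site d)) (τ : Conf d)
    (σ η : ↥Λ → Bool) : ℝ :=
  ∏ i : ↥Λ, pval β h k i.1 (σ i) (fill Λ η τ)

/-- The boundary field `Σ_{j ∈ Λ^c} k(i-j) τ_j`. -/
def outField {d : ℕ} (k : Site d → ℝ) (Λ : Finset (Site d)) (τ : Conf d) (i : Site d) : ℝ :=
  ∑' j : Site d, if j ∈ Λ then 0 else k (i - j) * val (τ j)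

/-- Unnormalized stationary measure of the finite volume PCA:
`∏_{i∈Λ} e^{βhσ_i} cosh(β Σ_j k(i-j) σ̃_j + βh) e^{β σ_i Σ_{j∈Λ^c} k(i-j) τ_j}`. -/
def nuNum {d : ℕ} (β h : ℝ) (k : Site d → ℝ) (Λ : Finset (Site d)) (τ : Conf d)
    (σ : ↥Λ → Bool) : ℝ :=
  ∏ i : ↥Λ,
    Real.exp (β * h * val (σ i))
      * Real.cosh (β * field k i.1 (fill Λ σ τ) + β * h)
      * Real.exp (β * val (σ i) * outField k Λ τ i.1)

/-- The normalized stationary measure `ν_Λ^τ`. -/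
def nu {d : ℕ} (β h : ℝ) (k : Site d → ℝ) (Λ : Finset (Site d)) (τ : Conf d)
    (σ : ↥Λ → Bool) : ℝ :=
  nuNum β h k Λ τ σ / ∑ σ' : ↥Λ → Bool, nuNum β h k Λ τ σ'

section Markov

variable {α : Type*}

def IsReversible (P : α → α → ℝ) (ν : α → ℝ) : Prop :=
  ∀ σ η, P σ η * ν η = P η σ * ν σ

theorem IsReversible.div_const {P : α → α → ℝ} {ν : α → ℝ} (hν : IsReversible P ν) (c : ℝ) :
    IsReversible P fun σ => ν σ / c := fun σ η => by
  simp only [mul_div_assoc', hν σ η]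

variable [Fintype α]

def IsStationary (P : α → α → ℝ) (ν : α → ℝ) : Prop :=
  ∀ σ, ∑ η, P σ η * ν η = ν σ

variable {P : α → α → ℝ}

theorem IsReversible.isStationary {ν : α → ℝ} (hP : ∀ η, ∑ σ, P σ η = 1)
    (hν : IsReversible P ν) : IsStationary P ν := fun σ =>
  calc ∑ η, P σ η * ν η = ∑ η, P η σ * ν σ := Finset.sum_congr rfl fun η _ => hν σ η
    _ = ν σ := by rw [← Finset.sum_mul, hP, one_mul]

theorem IsStationary.sub {μ ν : α → ℝ} (hμ : IsStationary P μ) (hν : IsStationary P ν) :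
    IsStationary P (μ - ν) := fun σ => by
  simp only [Pi.sub_apply, mul_sub, Finset.sum_sub_distrib, hμ σ, hν σ]

theorem IsStationary.const_smul {ν : α → ℝ} (hν : IsStationary P ν) (c : ℝ) :
    IsStationary P (c • ν) := fun σ => by
  simp only [Pi.smul_apply, smul_eq_mul, mul_left_comm _ c, ← Finset.mul_sum, hν σ]

theorem IsStationary.eq_zero_of_nonneg (hP : ∀ σ η, 0 < P σ η) {g : α → ℝ}
    (hg : IsStationary P g) (hg₀ : 0 ≤ g) {σ₀ : α} (hσ₀ : g σ₀ = 0) : g = 0 := by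
  funext η
  have hsum : ∑ η, P σ₀ η * g η = 0 := (hg σ₀).trans hσ₀
  have hterm := (Finset.sum_eq_zero_iff_of_nonneg fun η _ =>
    mul_nonneg (hP σ₀ η).le (hg₀ η)).1 hsum η (Finset.mem_univ η)
  exact (mul_eq_zero.1 hterm).resolve_left (hP σ₀ η).ne'

/-- The minimal ratio `c = min μ/ν` makes `μ - c ν` a nonnegative stationary vector with a zero,
which a positive kernel forces to vanish. -/
theorem IsStationary.eq_of_pos (hP : ∀ σ η, 0 < P σ η) {μ ν : α → ℝ}
    (hμ : IsStationary P μ) (hν : IsStationary P ν) (hν_pos : ∀ σ, 0 < ν σ)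
    (hsum : ∑ σ, μ σ = ∑ σ, ν σ) : μ = ν := by
  cases isEmpty_or_nonempty α
  · exact Subsingleton.elim _ _
  obtain ⟨σ₀, hσ₀⟩ := Finite.exists_min fun σ => μ σ / ν σ
  set c := μ σ₀ / ν σ₀
  have hnonneg : 0 ≤ μ - c • ν := fun σ => by
    simpa [sub_nonneg] using (le_div_iff₀ (hν_pos σ)).1 (hσ₀ σ)
  have hzero := (hμ.sub (hν.const_smul c)).eq_zero_of_nonneg hP hnonneg (σ₀ := σ₀)
    (by simp [c, div_mul_cancel₀ _ (hν_pos σ₀).ne'])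
  have hμc : μ = c • ν := sub_eq_zero.1 hzero
  have hc : c = 1 := by
    have hpos : 0 < ∑ σ, ν σ := Finset.sum_pos (fun σ _ => hν_pos σ) Finset.univ_nonempty
    rw [hμc] at hsum
    simp only [Pi.smul_apply, smul_eq_mul, ← Finset.mul_sum] at hsum
    exact (mul_eq_right₀ hpos.ne').1 hsum
  rw [hμc, hc, one_smul]

end Markov

theorem one_add_val_mul_tanh_div_two (b : Bool) (x : ℝ) :
    (1 + val b * Real.tanh x) / 2 = Real.exp (val b * x) / (2 * Real.cosh x) := by
  have hc := (Real.cosh_pos x).ne'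
  rw [Real.tanh_eq_sinh_div_cosh, Real.sinh_eq, Real.cosh_eq] at *
  cases b <;> simp only [val, Bool.false_eq_true, if_true, if_false] <;> field_simp
  all_goals ring

section FiniteVolume

variable {d : ℕ} (β h : ℝ) (k : Site d → ℝ) (Λ : Finset (Site d)) (τ : Conf d)

theorem pval_eq (i : Site d) (s : Bool) (η : Conf d) :
    pval β h k i s η = Real.exp (val s * (β * field k i η + β * h)) /
      (2 * Real.cosh (β * field k i η + β * h)) :=
  one_add_val_mul_tanh_div_two s _

theorem pval_pos (i : Site d) (s : Bool) (η : Conf d) : 0 < pval β h k i s η := by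
  rw [pval_eq]
  exact div_pos (Real.exp_pos _) (mul_pos two_pos (Real.cosh_pos _))

theorem pval_true_add_pval_false (i : Site d) (η : Conf d) :
    pval β h k i true η + pval β h k i false η = 1 := by
  simp only [pval, val, if_true, Bool.false_eq_true, if_false]
  ring

theorem Pfin_pos (σ η : ↥Λ → Bool) : 0 < Pfin β h k Λ τ σ η :=
  Finset.prod_pos fun i _ => pval_pos β h k i.1 (σ i) _

theorem sum_Pfin_eq_one (η : ↥Λ → Bool) : ∑ σ, Pfin β h k Λ τ σ η = 1 := by
  simp only [Pfin]
  rw [← Fintype.prod_sum (fun (i : ↥Λ) s => pval β h k i.1 s (fill Λ η τ))]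
  exact Finset.prod_eq_one fun i _ => by
    rw [Fintype.sum_bool, pval_true_add_pval_false]

theorem finite_support_of_normSq_lt {R : ℝ} (hk : ∀ i : Site d, R ^ 2 < (normSq i : ℝ) → k i = 0) :
    (Function.support k).Finite := by
  refine (Fintype.piFinset fun _ : Fin d => Finset.Icc (-⌈R ^ 2⌉) ⌈R ^ 2⌉).finite_toSet.subset
    fun i hi => ?_
  have hnorm : (normSq i : ℝ) ≤ R ^ 2 := not_lt.1 (mt (hk i) hi)
  simp only [Finset.mem_coe, Fintype.mem_piFinset, Finset.mem_Icc, ← abs_le]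
  intro t
  have hcoord : |i t| ≤ normSq i :=
    calc |i t| ≤ i t ^ 2 := by rw [← sq_abs]; exact Int.le_self_sq _
      _ ≤ normSq i := Finset.single_le_sum (f := fun t => i t ^ 2)
          (fun _ _ => sq_nonneg _) (Finset.mem_univ t)
  exact hcoord.trans (Int.cast_le.1 (hnorm.trans (Int.le_ceil _)))

theorem field_fill (hk : (Function.support k).Finite) (i : Site d) (η : ↥Λ → Bool) :
    field k i (fill Λ η τ) = ∑ j : ↥Λ, k (i - j) * val (η j) + outField k Λ τ i := by
  have hki : (Function.support fun j => k (i - j)).Finite :=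
    hk.preimage sub_right_injective.injOn
  have hsummable : ∀ a : Site d → ℝ, Summable fun j => k (i - j) * a j := fun a =>
    summable_of_hasFiniteSupport (hki.subset (Function.support_mul_subset_left _ _))
  have hsplit : field k i (fill Λ η τ) = ∑' j, (if j ∈ Λ then k (i - j) * val (fill Λ η τ j) else 0)
      + outField k Λ τ i := by
    rw [field, outField, ← Summable.tsum_add]
    · congr 1
      funext j
      by_cases hj : j ∈ Λ <;> simp [hj, fill]
    · exact (hsummable fun j => if j ∈ Λ then val (fill Λ η τ j) else 0).congr fun j => by
        split_ifs <;> simp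
    · exact (hsummable fun j => if j ∈ Λ then 0 else val (τ j)).congr fun j => by
        split_ifs <;> simp
  rw [hsplit, tsum_eq_sum (s := Λ) (fun j hj => if_neg hj), Finset.sum_ite_mem, Finset.inter_self,
    ← Finset.sum_coe_sort Λ]
  simp [fill]

def pairHamiltonian (σ η : ↥Λ → Bool) : ℝ :=
  β * ∑ i : ↥Λ, ∑ j : ↥Λ, k (i - j) * (val (σ i) * val (η j))
    + β * ∑ i : ↥Λ, (outField k Λ τ i + h) * (val (σ i) + val (η i))

theorem pairHamiltonian_comm (hsym : ∀ i : Site d, k (-i) = k i) (σ η : ↥Λ → Bool) :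
    pairHamiltonian β h k Λ τ σ η = pairHamiltonian β h k Λ τ η σ := by
  have hinter : ∑ i : ↥Λ, ∑ j : ↥Λ, k (i - j) * (val (σ i) * val (η j))
      = ∑ i : ↥Λ, ∑ j : ↥Λ, k (i - j) * (val (η i) * val (σ j)) := by
    rw [Finset.sum_comm]
    refine Finset.sum_congr rfl fun i _ => Finset.sum_congr rfl fun j _ => ?_
    rw [← hsym, neg_sub, mul_comm (val (σ j))]
  simp only [pairHamiltonian, hinter, add_comm (val (σ _))]

theorem Pfin_mul_nuNum (hk : (Function.support k).Finite) (σ η : ↥Λ → Bool) :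
    Pfin β h k Λ τ σ η * nuNum β h k Λ τ η
      = Real.exp (pairHamiltonian β h k Λ τ σ η) / 2 ^ Λ.card := by
  have hsite : ∀ i : ↥Λ, pval β h k i (σ i) (fill Λ η τ)
      * (Real.exp (β * h * val (η i)) * Real.cosh (β * field k i (fill Λ η τ) + β * h)
        * Real.exp (β * val (η i) * outField k Λ τ i))
      = Real.exp (val (σ i) * (β * ∑ j : ↥Λ, k (i - j) * val (η j))
          + β * (outField k Λ τ i + h) * (val (σ i) + val (η i))) / 2 := by
    intro i
    rw [pval_eq, div_mul_eq_mul_div, div_eq_div_iff (by positivity) two_ne_zero,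
      field_fill k Λ τ hk]
    set F := ∑ j : ↥Λ, k (i - j) * val (η j)
    set E := outField k Λ τ i
    rw [show val (σ i) * (β * F) + β * (E + h) * (val (σ i) + val (η i))
        = val (σ i) * (β * (F + E) + β * h) + β * h * val (η i) + β * val (η i) * E by ring,
      Real.exp_add, Real.exp_add]
    ring
  rw [Pfin, nuNum, ← Finset.prod_mul_distrib, Finset.prod_congr rfl fun i _ => hsite i,
    Finset.prod_div_distrib, ← Real.exp_sum, Finset.prod_const, Finset.card_univ,
    Fintype.card_coe]
  congr 2
  simp only [pairHamiltonian, Finset.mul_sum, Finset.sum_add_distrib, mul_assoc]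
  congr 1
  refine Finset.sum_congr rfl fun i _ => Finset.sum_congr rfl fun j _ => ?_
  ring

theorem isReversible_nuNum (hsym : ∀ i : Site d, k (-i) = k i)
    (hk : (Function.support k).Finite) : IsReversible (Pfin β h k Λ τ) (nuNum β h k Λ τ) :=
  fun σ η => by
    rw [Pfin_mul_nuNum β h k Λ τ hk, Pfin_mul_nuNum β h k Λ τ hk,
      pairHamiltonian_comm β h k Λ τ hsym]

theorem isReversible_nu (hsym : ∀ i : Site d, k (-i) = k i) (hk : (Function.support k).Finite) :
    IsReversible (Pfin β h k Λ τ) (nu β h k Λ τ) :=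
  (isReversible_nuNum β h k Λ τ hsym hk).div_const _

theorem nuNum_pos (σ : ↥Λ → Bool) : 0 < nuNum β h k Λ τ σ :=
  Finset.prod_pos fun _ _ => by positivity

theorem nu_pos (σ : ↥Λ → Bool) : 0 < nu β h k Λ τ σ :=
  div_pos (nuNum_pos β h k Λ τ σ) (Finset.sum_pos (fun σ _ => nuNum_pos β h k Λ τ σ)
    Finset.univ_nonempty)

theorem sum_nu : ∑ σ, nu β h k Λ τ σ = 1 := by
  simp only [nu, ← Finset.sum_div]
  exact div_self (Finset.sum_pos (fun σ _ => nuNum_pos β h k Λ τ σ) Finset.univ_nonempty).ne'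

end FiniteVolume

theorem stmt5_general {d : ℕ} (β h R : ℝ)
    (k : Site d → ℝ) (hsym : ∀ i : Site d, k (-i) = k i)
    (hrange : ∀ i : Site d, R ^ 2 < (normSq i : ℝ) → k i = 0)
    (Λ : Finset (Site d)) (τ : Conf d) :
    (∀ σ : ↥Λ → Bool, 0 ≤ nu β h k Λ τ σ) ∧
    (∑ σ : ↥Λ → Bool, nu β h k Λ τ σ = 1) ∧
    (∀ σ : ↥Λ → Bool,
      ∑ η : ↥Λ → Bool, Pfin β h k Λ τ σ η * nu β h k Λ τ η = nu β h k Λ τ σ) ∧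
    (∀ ν' : (↥Λ → Bool) → ℝ, (∀ η, 0 ≤ ν' η) → (∑ η : ↥Λ → Bool, ν' η = 1) →
      (∀ σ : ↥Λ → Bool, ∑ η : ↥Λ → Bool, Pfin β h k Λ τ σ η * ν' η = ν' σ) →
      ν' = nu β h k Λ τ) ∧
    (∀ σ η : ↥Λ → Bool,
      Pfin β h k Λ τ σ η * nu β h k Λ τ η = Pfin β h k Λ τ η σ * nu β h k Λ τ σ) := by
  have hrev := isReversible_nu β h k Λ τ hsym (finite_support_of_normSq_lt k hrange)
  have hstat := hrev.isStationary (sum_Pfin_eq_one β h k Λ τ)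
  refine ⟨fun σ => (nu_pos β h k Λ τ σ).le, sum_nu β h k Λ τ, hstat, ?_, hrev⟩
  intro ν' _ hsum hν'
  exact IsStationary.eq_of_pos (Pfin_pos β h k Λ τ) hν' hstat (nu_pos β h k Λ τ)
    (by rw [hsum, sum_nu])

/-- For finite `Λ ⊂ ℤ^d` and boundary condition `τ`, the finite volume PCA
`P_Λ^τ` has `ν_Λ^τ` as its unique stationary probability measure, and `ν_Λ^τ` is
reversible for `P_Λ^τ`. -/
theorem stmt5 {d : ℕ} (hd : 0 < d) (β h R : ℝ) (hβ : 0 < β) (hR : 0 < R)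
    (k : Site d → ℝ) (hsym : ∀ i : Site d, k (-i) = k i)
    (hrange : ∀ i : Site d, R ^ 2 < (normSq i : ℝ) → k i = 0)
    (Λ : Finset (Site d)) (τ : Conf d) :
    (∀ σ : ↥Λ → Bool, 0 ≤ nu β h k Λ τ σ) ∧
    (∑ σ : ↥Λ → Bool, nu β h k Λ τ σ = 1) ∧
    (∀ σ : ↥Λ → Bool,
      ∑ η : ↥Λ → Bool, Pfin β h k Λ τ σ η * nu β h k Λ τ η = nu β h k Λ τ σ) ∧
    (∀ ν' : (↥Λ → Bool) → ℝ, (∀ η, 0 ≤ ν' η) → (∑ η : ↥Λ → Bool, ν' η = 1) →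
      (∀ σ : ↥Λ → Bool, ∑ η : ↥Λ → Bool, Pfin β h k Λ τ σ η * ν' η = ν' σ) →
      ν' = nu β h k Λ τ) ∧
    (∀ σ η : ↥Λ → Bool,
      Pfin β h k Λ τ σ η * nu β h k Λ τ η = Pfin β h k Λ τ η σ * nu β h k Λ τ σ) :=
  stmt5_general β h R k hsym hrange Λ τ

end
end PCA
end

section
/- Fix a boundary condition τ ∈ {−1,1}^{Z^d} and let μ be any weak limit point of the finite-volume stationary measures ν_Λ^τ (extended to {−1,1}^{Z^d} by τ outside Λ) as Λ ↑ Z^d. Then μ is a Gibbs measure for the shift-invariant potential Φ given by Φ_{{i}}(σ) = −βh σ_i, Φ_{U_i}(σ) = −log cosh(β Σ_j k(i−j)σ_j + βh) where U_i = {j : k(i−j) ≠ 0}, and Φ_A = 0 for all other finite A ⊂ Z^d. -/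
open MeasureTheory Filter

namespace PCA

noncomputable section

/-- The cylinder set of configurations agreeing with `a` on `Λ`. -/
def cylB {d : ℕ} (Λ : Finset (Site d)) (a : ↥Λ → Bool) : Set (Conf d) :=
  {σ : Conf d | ∀ j : ↥Λ, σ j.1 = a j}

/-- `P` is the (infinite volume) PCA kernel with single site probabilities `pval β h k`:
on every cylinder, `P(·|η)` is the product of the single site probabilities. -/
def IsPCAB {d : ℕ} (β h : ℝ) (k : Site d → ℝ)
    (P : ProbabilityTheory.Kernel (Conf d) (Conf d)) : Prop :=
  ∀ (η : Conf d) (Λ : Finset (Site d)) (a : ↥Λ → Bool),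
    P η (cylB Λ a) = ∏ j : ↥Λ, ENNReal.ofReal (pval β h k j.1 (a j) η)

/-- The Hamiltonian `H_Λ^τ(a) = Σ_{A ∩ Λ ≠ ∅} Φ_A(a_Λ τ_{Λ^c})` for the potential
`Φ_{{i}}(σ) = -βhσ_i`, `Φ_{U_i}(σ) = -log cosh(β Σ_j k(i-j)σ_j + βh)`,
`U_i = {j : k(i-j) ≠ 0}`, and `Φ_A = 0` otherwise. -/
def hamB {d : ℕ} (β h : ℝ) (k : Site d → ℝ) (Λ : Finset (Site d)) (a : ↥Λ → Bool)
    (τ : Conf d) : ℝ :=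
  (∑ i : ↥Λ, -(β * h * val (a i))) +
    ∑' i : Site d,
      Set.indicator {i : Site d | ∃ j ∈ Λ, k (i - j) ≠ 0}
        (fun i => -Real.log (Real.cosh (β * field k i (fill Λ a τ) + β * h))) i

/-- The finite volume Gibbs weight `μ_Λ^τ(a) = exp(-H_Λ^τ(a))/Z_Λ^τ`. -/
def gibbsWB {d : ℕ} (β h : ℝ) (k : Site d → ℝ) (Λ : Finset (Site d)) (a : ↥Λ → Bool)
    (τ : Conf d) : ℝ :=
  Real.exp (-hamB β h k Λ a τ) / ∑ b : ↥Λ → Bool, Real.exp (-hamB β h k Λ b τ)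

/-- The σ-algebra generated by the spins outside `Λ`. -/
def outer {d : ℕ} (Λ : Finset (Site d)) : MeasurableSpace (Conf d) :=
  MeasurableSpace.comap (fun σ (j : {j : Site d // j ∉ Λ}) => σ j.1) MeasurableSpace.pi

/-- `μ` is a Gibbs measure for the potential associated to `β`, `h`, `k` (DLR equations):
for every finite `Λ`, conditionally on the configuration outside `Λ`, the configuration
on `Λ` is distributed according to the finite volume Gibbs measure. -/
def IsGibbsB {d : ℕ} (β h : ℝ) (k : Site d → ℝ) (μ : Measure (Conf d)) : Prop :=
  ∀ (Λ : Finset (Site d)) (a : ↥Λ → Bool) (B : Set (Conf d)),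
    MeasurableSet[outer Λ] B →
    μ (cylB Λ a ∩ B) = ∫⁻ τ in B, ENNReal.ofReal (gibbsWB β h k Λ a τ) ∂μ

/-- The centered hypercube `[-n,n]^d ∩ ℤ^d`. -/
def boxCc {d : ℕ} (n : ℕ) : Finset (Site d) :=
  Fintype.piFinset fun _ => Finset.Icc (-(n : ℤ)) (n : ℤ)

/-- A local function on configuration space: it depends on finitely many spins. -/
def LocalFun {d : ℕ} (f : Conf d → ℝ) : Prop :=
  ∃ Δ : Finset (Site d), ∀ σ σ' : Conf d, (∀ j ∈ Δ, σ j = σ' j) → f σ = f σ'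

/-- The finite volume stationary measure `ν_Λ^τ` viewed as a probability measure on the
whole configuration space, extending configurations by `τ` outside `Λ`. -/
def nuMeas {d : ℕ} (β h : ℝ) (k : Site d → ℝ) (Λ : Finset (Site d)) (τ : Conf d) :
    Measure (Conf d) :=
  ∑ a : ↥Λ → Bool, ENNReal.ofReal (nu β h k Λ τ a) • Measure.dirac (fill Λ a τ)

/-!
If `Λ'` contains `Λ` together with every site interacting with it, the stationary weight
`nuNum` on `Λ'` factorises as `exp (-H_Λ)` times a factor that does not see the spins in `Λ`.
Summing over the spins in `Λ` shows that `ν_{Λ'}` satisfies the DLR equation on `Λ` against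
every test function of the spins outside `Λ`. For a local test function both sides are integrals
of local functions, so the equation passes to every limit point along volumes exhausting `ℤ^d`;
a π-λ argument over the cylinder events outside `Λ` then extends it to all of `outer Λ`.
-/

variable {d : ℕ}

theorem fill_of_mem {Λ : Finset (Site d)} (a : ↥Λ → Bool) (τ : Conf d) {j : Site d}
    (hj : j ∈ Λ) : fill Λ a τ j = a ⟨j, hj⟩ := by
  simp [fill, hj]

theorem fill_of_notMem {Λ : Finset (Site d)} (a : ↥Λ → Bool) (τ : Conf d) {j : Site d}
    (hj : j ∉ Λ) : fill Λ a τ j = τ j := by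
  simp [fill, hj]

theorem dependsOn_fill_compl (Λ : Finset (Site d)) (a : ↥Λ → Bool) :
    DependsOn (fill Λ a) (↑Λ)ᶜ := fun τ₁ τ₂ h => by
  funext j
  by_cases hj : j ∈ Λ
  · rw [fill_of_mem a τ₁ hj, fill_of_mem a τ₂ hj]
  · rw [fill_of_notMem a τ₁ hj, fill_of_notMem a τ₂ hj, h j hj]

theorem fill_restrict_self (Λ : Finset (Site d)) (σ : Conf d) :
    fill Λ (fun i => σ i) σ = σ := by
  funext j
  by_cases hj : j ∈ Λ
  · rw [fill_of_mem _ σ hj]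
  · rw [fill_of_notMem _ σ hj]

theorem dependsOn_hamB_compl (β h : ℝ) (k : Site d → ℝ) (Λ : Finset (Site d))
    (b : ↥Λ → Bool) : DependsOn (hamB β h k Λ b) (↑Λ)ᶜ := fun τ₁ τ₂ hτ => by
  rw [hamB, hamB, dependsOn_fill_compl Λ b hτ]

theorem gibbsWB_nonneg (β h : ℝ) (k : Site d → ℝ) (Λ : Finset (Site d)) (a : ↥Λ → Bool)
    (τ : Conf d) : 0 ≤ gibbsWB β h k Λ a τ := by
  unfold gibbsWB
  positivity

theorem gibbsWB_le_one (β h : ℝ) (k : Site d → ℝ) (Λ : Finset (Site d)) (a : ↥Λ → Bool)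
    (τ : Conf d) : gibbsWB β h k Λ a τ ≤ 1 :=
  div_le_one_of_le₀ (Finset.single_le_sum (f := fun b => Real.exp (-hamB β h k Λ b τ))
    (fun b _ => (Real.exp_pos _).le) (Finset.mem_univ a)) (by positivity)

theorem DependsOn.gibbsWB {β h : ℝ} {k : Site d → ℝ} {Λ : Finset (Site d)} {s : Set (Site d)}
    (hs : ∀ b, DependsOn (hamB β h k Λ b) s) (a : ↥Λ → Bool) :
    DependsOn (gibbsWB β h k Λ a) s := fun τ₁ τ₂ hτ => by
  simp only [PCA.gibbsWB, hs _ hτ]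

section FiniteRange

variable {k : Site d → ℝ} {K : Finset (Site d)}

/-- Contains `U_i = {j | k (i - j) ≠ 0}` as soon as `k` vanishes off `K`. -/
def nbhd (K : Finset (Site d)) (i : Site d) : Finset (Site d) := K.image (i - ·)

theorem mem_nbhd {i j : Site d} : j ∈ nbhd K i ↔ i - j ∈ K := by
  simp only [nbhd, Finset.mem_image]
  exact ⟨fun ⟨s, hs, hj⟩ => by rwa [← hj, sub_sub_cancel],
    fun hj => ⟨i - j, hj, sub_sub_cancel i j⟩⟩

open Classical in
/-- The sites `i` with `U_i ∩ Λ ≠ ∅`; the `biUnion` only serves to make this set a `Finset`. -/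
def coupled (k : Site d → ℝ) (K Λ : Finset (Site d)) : Finset (Site d) :=
  (Λ.biUnion fun j => K.image (· + j)).filter fun i => ∃ j ∈ Λ, k (i - j) ≠ 0

variable (hK : ∀ i ∉ K, k i = 0)
include hK

theorem mem_coupled {Λ : Finset (Site d)} {i : Site d} :
    i ∈ coupled k K Λ ↔ ∃ j ∈ Λ, k (i - j) ≠ 0 := by
  classical
  refine ⟨fun hi => (Finset.mem_filter.1 hi).2, fun ⟨j, hj, hkj⟩ => ?_⟩
  refine Finset.mem_filter.2 ⟨Finset.mem_biUnion.2 ⟨j, hj, Finset.mem_image.2 ⟨i - j, ?_, ?_⟩⟩,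
    j, hj, hkj⟩
  · by_contra hc
    exact hkj (hK _ hc)
  · exact sub_add_cancel i j

theorem field_eq_sum_nbhd (i : Site d) (η : Conf d) :
    field k i η = ∑ j ∈ nbhd K i, k (i - j) * val (η j) :=
  tsum_eq_sum fun j hj => by rw [hK _ (mt mem_nbhd.2 hj), zero_mul]

theorem dependsOn_field (i : Site d) : DependsOn (field k i) ↑(nbhd K i) := fun η η' h => by
  rw [field_eq_sum_nbhd hK, field_eq_sum_nbhd hK]
  exact Finset.sum_congr rfl fun j hj => by rw [h j hj]

theorem dependsOn_field_compl {Λ : Finset (Site d)} {i : Site d} (hi : i ∉ coupled k K Λ) :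
    DependsOn (field k i) (↑Λ)ᶜ := fun η η' h => by
  rw [field_eq_sum_nbhd hK, field_eq_sum_nbhd hK]
  refine Finset.sum_congr rfl fun j _ => ?_
  by_cases hj : j ∈ Λ
  · rw [not_not.1 fun hk => hi ((mem_coupled hK).2 ⟨j, hj, hk⟩), zero_mul, zero_mul]
  · rw [h j hj]

theorem outField_eq_zero {Λ : Finset (Site d)} (τ : Conf d) {i : Site d}
    (hsub : nbhd K i ⊆ Λ) : outField k Λ τ i = 0 := by
  refine (tsum_congr fun j => ?_).trans tsum_zero
  by_cases hj : j ∈ Λ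
  · rw [if_pos hj]
  · rw [if_neg hj, hK _ (mt mem_nbhd.2 (mt (@hsub j) hj)), zero_mul]

theorem exp_neg_hamB (β h : ℝ) (Λ : Finset (Site d)) (a : ↥Λ → Bool) (τ : Conf d) :
    Real.exp (-hamB β h k Λ a τ)
      = (∏ i : ↥Λ, Real.exp (β * h * val (a i)))
        * ∏ i ∈ coupled k K Λ, Real.cosh (β * field k i (fill Λ a τ) + β * h) := by
  classical
  have hsum : ∑' i, Set.indicator {i | ∃ j ∈ Λ, k (i - j) ≠ 0}
      (fun i => -Real.log (Real.cosh (β * field k i (fill Λ a τ) + β * h))) i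
      = ∑ i ∈ coupled k K Λ, -Real.log (Real.cosh (β * field k i (fill Λ a τ) + β * h)) := by
    refine (tsum_eq_sum fun i hi => ?_).trans (Finset.sum_congr rfl fun i hi => ?_)
    · exact Set.indicator_of_notMem (s := {i | ∃ j ∈ Λ, k (i - j) ≠ 0})
        (mt (mem_coupled hK).2 hi) _
    · exact Set.indicator_of_mem (s := {i | ∃ j ∈ Λ, k (i - j) ≠ 0})
        ((mem_coupled hK).1 hi) _
  rw [hamB, hsum, neg_add, ← Finset.sum_neg_distrib, ← Finset.sum_neg_distrib, Real.exp_add,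
    Real.exp_sum, Real.exp_sum]
  simp only [neg_neg, Real.exp_log (Real.cosh_pos _)]

theorem dependsOn_hamB (β h : ℝ) (Λ : Finset (Site d)) (b : ↥Λ → Bool) :
    DependsOn (hamB β h k Λ b) ↑((coupled k K Λ).biUnion (nbhd K)) := fun τ₁ τ₂ hτ => by
  suffices ∀ i ∈ coupled k K Λ, field k i (fill Λ b τ₁) = field k i (fill Λ b τ₂) by
    rw [← neg_inj, ← Real.exp_eq_exp, exp_neg_hamB hK, exp_neg_hamB hK]
    exact congrArg _ (Finset.prod_congr rfl fun i hi => by rw [this i hi])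
  refine fun i hi => dependsOn_field hK i fun j hj => ?_
  by_cases hjΛ : j ∈ Λ
  · rw [fill_of_mem b τ₁ hjΛ, fill_of_mem b τ₂ hjΛ]
  · rw [fill_of_notMem b τ₁ hjΛ, fill_of_notMem b τ₂ hjΛ]
    exact hτ j (Finset.mem_biUnion.2 ⟨i, hi, hj⟩)

end FiniteRange

section Glue

variable {Λ Λ' : Finset (Site d)}

def glue (a : ↥Λ → Bool) (c : ↥(Λ' \ Λ) → Bool) : ↥Λ' → Bool :=
  fun i => if h : i.1 ∈ Λ then a ⟨i.1, h⟩ else c ⟨i.1, Finset.mem_sdiff.2 ⟨i.2, h⟩⟩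

def glueEquiv (hsub : Λ ⊆ Λ') : ((↥Λ → Bool) × (↥(Λ' \ Λ) → Bool)) ≃ (↥Λ' → Bool) where
  toFun p := glue p.1 p.2
  invFun b := (fun i => b ⟨i.1, hsub i.2⟩, fun i => b ⟨i.1, (Finset.mem_sdiff.1 i.2).1⟩)
  left_inv p := by
    ext i
    · simp [glue, i.2]
    · simp [glue, (Finset.mem_sdiff.1 i.2).2]
  right_inv b := by
    funext i
    by_cases hi : i.1 ∈ Λ <;> simp [glue, hi]

theorem sum_glue {M : Type*} [AddCommMonoid M] (hsub : Λ ⊆ Λ') (f : (↥Λ' → Bool) → M) :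
    ∑ b, f b = ∑ c : ↥(Λ' \ Λ) → Bool, ∑ a : ↥Λ → Bool, f (glue a c) := by
  rw [← (glueEquiv hsub).sum_comp, Fintype.sum_prod_type_right]
  rfl

theorem fill_glue_of_mem (hsub : Λ ⊆ Λ') (a : ↥Λ → Bool) (c : ↥(Λ' \ Λ) → Bool)
    (τ : Conf d) {j : Site d} (hj : j ∈ Λ) : fill Λ' (glue a c) τ j = a ⟨j, hj⟩ := by
  simp [fill, glue, hj, hsub hj]

theorem fill_glue_of_notMem (a a' : ↥Λ → Bool) (c : ↥(Λ' \ Λ) → Bool) (τ : Conf d)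
    {j : Site d} (hj : j ∉ Λ) :
    fill Λ' (glue a c) τ j = fill Λ' (glue a' c) τ j := by
  simp [fill, glue, hj]

theorem restrict_fill_glue (hsub : Λ ⊆ Λ') (a : ↥Λ → Bool) (c : ↥(Λ' \ Λ) → Bool)
    (τ : Conf d) : (fun i : ↥Λ => fill Λ' (glue a c) τ i) = a :=
  funext fun i => fill_glue_of_mem hsub a c τ i.2

theorem fill_glue_mem_cylB_iff (hsub : Λ ⊆ Λ') (a a' : ↥Λ → Bool) (c : ↥(Λ' \ Λ) → Bool)
    (τ : Conf d) : fill Λ' (glue a' c) τ ∈ cylB Λ a ↔ a' = a := by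
  refine ⟨fun h => funext fun i => (fill_glue_of_mem hsub a' c τ i.2).symm.trans (h i), ?_⟩
  rintro rfl i
  exact fill_glue_of_mem hsub a' c τ i.2

end Glue

section Factorization

variable {β h : ℝ} {k : Site d → ℝ} {K Λ Λ' : Finset (Site d)} {τ : Conf d}

/-- The factors of the stationary weight on `Λ'` that do not involve the spins in `Λ`. -/
def restWeight (β h : ℝ) (k : Site d → ℝ) (K Λ Λ' : Finset (Site d)) (τ σ : Conf d) : ℝ :=
  (∏ i ∈ Λ' \ Λ, Real.exp (β * h * val (σ i)) * Real.exp (β * val (σ i) * outField k Λ' τ i))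
    * ∏ i ∈ Λ' \ coupled k K Λ, Real.cosh (β * field k i σ + β * h)

variable (hK : ∀ i ∉ K, k i = 0)
include hK

theorem dependsOn_restWeight : DependsOn (restWeight β h k K Λ Λ' τ) (↑Λ)ᶜ :=
  fun σ σ' hσ => by
  unfold restWeight
  congr 1
  · refine Finset.prod_congr rfl fun i hi => ?_
    rw [hσ i (Finset.mem_sdiff.1 hi).2]
  · refine Finset.prod_congr rfl fun i hi => ?_
    rw [dependsOn_field_compl hK (Finset.mem_sdiff.1 hi).2 hσ]

variable (hsub : Λ ⊆ Λ') (hS : coupled k K Λ ⊆ Λ') (hJ : ∀ i ∈ Λ, nbhd K i ⊆ Λ')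
include hsub hS hJ

theorem nuNum_eq_exp_neg_hamB_mul_restWeight (b : ↥Λ' → Bool) :
    nuNum β h k Λ' τ b
      = Real.exp (-hamB β h k Λ (fun i => fill Λ' b τ i) (fill Λ' b τ))
        * restWeight β h k K Λ Λ' τ (fill Λ' b τ) := by
  set σ := fill Λ' b τ
  set x := fun i => Real.exp (β * h * val (σ i))
  set y := fun i => Real.cosh (β * field k i σ + β * h)
  set z := fun i => Real.exp (β * val (σ i) * outField k Λ' τ i)
  have hnu : nuNum β h k Λ' τ b = ∏ i ∈ Λ', x i * y i * z i := by
    have hσ : ∀ i : ↥Λ', σ i = b i := fun i => fill_of_mem b τ i.2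
    rw [nuNum, ← Finset.prod_coe_sort Λ']
    exact Finset.prod_congr rfl fun i _ => by simp only [x, y, z, σ, hσ]
  -- the spins in `Λ` feel no boundary field, since `Λ'` contains all their neighbours
  have hz : ∏ i ∈ Λ, z i = 1 := Finset.prod_eq_one fun i hi => by
    simp only [z, outField_eq_zero hK τ (hJ i hi), mul_zero, Real.exp_zero]
  rw [hnu, exp_neg_hamB hK, fill_restrict_self, Finset.prod_coe_sort Λ x, restWeight,
    Finset.prod_mul_distrib, Finset.prod_mul_distrib, Finset.prod_mul_distrib,
    ← Finset.prod_sdiff hsub (f := x), ← Finset.prod_sdiff hS (f := y),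
    ← Finset.prod_sdiff hsub (f := z), hz]
  ring

theorem sum_nuNum_glue_mul_gibbsWB (a : ↥Λ → Bool) (c : ↥(Λ' \ Λ) → Bool) :
    (∑ a', nuNum β h k Λ' τ (glue a' c)) * gibbsWB β h k Λ a (fill Λ' (glue a c) τ)
      = nuNum β h k Λ' τ (glue a c) := by
  set σ := fill Λ' (glue a c) τ
  have hfactor : ∀ a', nuNum β h k Λ' τ (glue a' c)
      = Real.exp (-hamB β h k Λ a' σ) * restWeight β h k K Λ Λ' τ σ := fun a' => by
    have hσ : ∀ j ∉ (Λ : Set (Site d)), fill Λ' (glue a' c) τ j = σ j :=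
      fun j hj => fill_glue_of_notMem a' a c τ hj
    rw [nuNum_eq_exp_neg_hamB_mul_restWeight hK hsub hS hJ, restrict_fill_glue hsub,
      dependsOn_hamB_compl β h k Λ a' hσ, dependsOn_restWeight hK hσ]
  rw [Finset.sum_congr rfl fun a' _ => hfactor a', ← Finset.sum_mul, hfactor a, gibbsWB]
  field_simp

/-- The DLR equation for `ν_{Λ'}` on `Λ`. -/
theorem sum_nu_indicator_cylB_mul_eq (a : ↥Λ → Bool) {g : Conf d → ℝ}
    (hg : DependsOn g (↑Λ)ᶜ) :
    ∑ b, nu β h k Λ' τ b * ((cylB Λ a).indicator 1 (fill Λ' b τ) * g (fill Λ' b τ))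
      = ∑ b, nu β h k Λ' τ b * (gibbsWB β h k Λ a (fill Λ' b τ) * g (fill Λ' b τ)) := by
  simp only [nu, div_mul_eq_mul_div, ← Finset.sum_div, sum_glue hsub]
  congr 1
  refine Finset.sum_congr rfl fun c _ => ?_
  set σ := fill Λ' (glue a c) τ
  have hσ : ∀ a', ∀ j ∉ (Λ : Set (Site d)), fill Λ' (glue a' c) τ j = σ j :=
    fun a' j hj => fill_glue_of_notMem a' a c τ hj
  have hcyl : ∀ a' ≠ a, (cylB Λ a).indicator 1 (fill Λ' (glue a' c) τ) = (0 : ℝ) :=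
    fun a' ha' => Set.indicator_of_notMem (mt (fill_glue_mem_cylB_iff hsub a a' c τ).1 ha') _
  have hγ : ∀ a', gibbsWB β h k Λ a (fill Λ' (glue a' c) τ) = gibbsWB β h k Λ a σ :=
    fun a' => DependsOn.gibbsWB (dependsOn_hamB_compl β h k Λ) a (hσ a')
  rw [Finset.sum_eq_single_of_mem a (Finset.mem_univ a) fun a' _ ha' => by
      rw [hcyl a' ha', zero_mul, mul_zero],
    Set.indicator_of_mem ((fill_glue_mem_cylB_iff hsub a a c τ).2 rfl), Pi.one_apply, one_mul,
    Finset.sum_congr rfl fun a' _ => by rw [hγ a', hg (hσ a')],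
    ← Finset.sum_mul, ← mul_assoc, sum_nuNum_glue_mul_gibbsWB hK hsub hS hJ]

end Factorization

section Local

theorem LocalFun.of_dependsOn {f : Conf d → ℝ} {Δ : Finset (Site d)} (hf : DependsOn f ↑Δ) :
    LocalFun f :=
  ⟨Δ, fun _ _ h => hf h⟩

theorem LocalFun.mul {f g : Conf d → ℝ} (hf : LocalFun f) (hg : LocalFun g) :
    LocalFun fun σ => f σ * g σ := by
  obtain ⟨Δ, hΔ⟩ := hf
  obtain ⟨Δ', hΔ'⟩ := hg
  refine ⟨Δ ∪ Δ', fun σ σ' h => ?_⟩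
  dsimp only
  rw [hΔ σ σ' fun j hj => h j (Finset.mem_union_left _ hj),
    hΔ' σ σ' fun j hj => h j (Finset.mem_union_right _ hj)]

theorem LocalFun.measurable {f : Conf d → ℝ} (hf : LocalFun f) : Measurable f := by
  obtain ⟨Δ, hΔ⟩ := hf
  have hf : f = (fun x : ↥Δ → Bool => f (fill Δ x fun _ => false)) ∘ Finset.restrict Δ :=
    funext fun σ => hΔ _ _ fun j hj => (fill_of_mem (Δ.restrict σ) _ hj).symm
  rw [hf]
  exact (measurable_of_countable _).comp (Finset.measurable_restrict Δ)

theorem DependsOn.indicator_one {B : Set (Conf d)} {s : Set (Site d)}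
    (hB : DependsOn (· ∈ B) s) : DependsOn (B.indicator (1 : Conf d → ℝ)) s := fun σ σ' h => by
  by_cases hσ : σ ∈ B
  · rw [Set.indicator_of_mem hσ, Set.indicator_of_mem ((hB h).mp hσ), Pi.one_apply,
      Pi.one_apply]
  · rw [Set.indicator_of_notMem hσ, Set.indicator_of_notMem fun h' => hσ ((hB h).mpr h')]

theorem dependsOn_mem_cylB (Λ : Finset (Site d)) (a : ↥Λ → Bool) :
    DependsOn (· ∈ cylB Λ a) ↑Λ := fun σ σ' h =>
  propext (forall_congr' fun j => by rw [h j j.2])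

theorem localFun_gibbsWB {k : Site d → ℝ} {K : Finset (Site d)} (hK : ∀ i ∉ K, k i = 0)
    (β h : ℝ) (Λ : Finset (Site d)) (a : ↥Λ → Bool) : LocalFun (gibbsWB β h k Λ a) :=
  .of_dependsOn (DependsOn.gibbsWB (dependsOn_hamB hK β h Λ) a)

end Local

theorem integral_nuMeas (β h : ℝ) (k : Site d → ℝ) (Λ : Finset (Site d)) (τ : Conf d)
    {f : Conf d → ℝ} (hf : Measurable f) :
    ∫ σ, f σ ∂(nuMeas β h k Λ τ) = ∑ b, nu β h k Λ τ b * f (fill Λ b τ) := by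
  have hnu : ∀ b, 0 ≤ nu β h k Λ τ b := fun b => by unfold nu nuNum; positivity
  rw [nuMeas, integral_finsetSum_measure fun b _ => ?_]
  · refine Finset.sum_congr rfl fun b _ => ?_
    rw [integral_smul_measure, integral_dirac' f _ hf.stronglyMeasurable,
      ENNReal.toReal_ofReal (hnu b), smul_eq_mul]
  · refine ⟨hf.aestronglyMeasurable, ?_⟩
    rw [HasFiniteIntegral, lintegral_smul_measure, lintegral_dirac' _ hf.enorm]
    exact ENNReal.mul_lt_top ENNReal.ofReal_lt_top enorm_lt_top

theorem integrable_gibbsWB {k : Site d → ℝ} {K : Finset (Site d)} (hK : ∀ i ∉ K, k i = 0)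
    (β h : ℝ) (Λ : Finset (Site d)) (a : ↥Λ → Bool) {μ : Measure (Conf d)}
    [IsFiniteMeasure μ] :
    Integrable (gibbsWB β h k Λ a) μ :=
  .of_mem_Icc 0 1 (localFun_gibbsWB hK β h Λ a).measurable.aemeasurable
    (ae_of_all _ fun τ => ⟨gibbsWB_nonneg β h k Λ a τ, gibbsWB_le_one β h k Λ a τ⟩)

section Boxes

theorem mem_boxCc {n : ℕ} {i : Site d} : i ∈ boxCc n ↔ ∀ t, |i t| ≤ (n : ℤ) := by
  simp [boxCc, Fintype.mem_piFinset, abs_le]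

theorem eventually_subset_boxCc (A : Finset (Site d)) : ∀ᶠ n in atTop, A ⊆ boxCc n := by
  refine (Filter.eventually_all_finset A).2 fun i _ => ?_
  simp only [mem_boxCc]
  refine Filter.eventually_all.2 fun t => ?_
  filter_upwards [eventually_ge_atTop (i t).natAbs] with n hn
  rw [Int.abs_eq_natAbs]
  exact_mod_cast hn

theorem eq_zero_of_notMem_boxCc {k : Site d → ℝ} {R : ℝ}
    (hrange : ∀ i : Site d, R ^ 2 < (normSq i : ℝ) → k i = 0) {i : Site d}
    (hi : i ∉ boxCc ⌈|R|⌉₊) : k i = 0 := by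
  refine hrange i ?_
  obtain ⟨t, ht⟩ := not_forall.1 (mt mem_boxCc.2 hi)
  have hRt : |R| < |(i t : ℝ)| := calc
    |R| ≤ ⌈|R|⌉₊ := Nat.le_ceil _
    _ < |(i t : ℝ)| := by rw [← Int.cast_abs]; exact_mod_cast not_le.1 ht
  calc R ^ 2 < (i t : ℝ) ^ 2 := sq_lt_sq.2 hRt
    _ ≤ ∑ s, (i s : ℝ) ^ 2 := Finset.single_le_sum (f := fun s => (i s : ℝ) ^ 2)
        (fun s _ => sq_nonneg _) (Finset.mem_univ t)
    _ = normSq i := by simp [normSq]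

end Boxes

theorem measurableSet_of_dependsOn {B : Set (Conf d)} {Δ : Finset (Site d)}
    (hB : DependsOn (· ∈ B) ↑Δ) : MeasurableSet B :=
  (measurable_indicator_const_iff (1 : ℝ)).1
    (LocalFun.of_dependsOn (DependsOn.indicator_one hB)).measurable

theorem eq_on_outer_of_eq_on_local {ν₁ ν₂ : Measure (Conf d)} [IsFiniteMeasure ν₁]
    [IsFiniteMeasure ν₂] {Λ : Finset (Site d)}
    (h : ∀ (Δ : Finset (Site d)) (B : Set (Conf d)), Disjoint Δ Λ → DependsOn (· ∈ B) ↑Δ →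
      ν₁ B = ν₂ B)
    {B : Set (Conf d)} (hB : MeasurableSet[outer Λ] B) : ν₁ B = ν₂ B := by
  let res : Conf d → {j : Site d // j ∉ Λ} → Bool := fun σ j => σ j.1
  have hres : Measurable res := measurable_pi_lambda _ fun j => measurable_pi_apply _
  obtain ⟨T, hT, rfl⟩ := hB
  suffices ν₁.map res = ν₂.map res by
    rw [← Measure.map_apply hres hT, this, Measure.map_apply hres hT]
  refine ext_of_generate_finite _ generateFrom_measurableCylinders.symm
    isPiSystem_measurableCylinders (fun s hs => ?_) ?_
  · rw [Measure.map_apply hres (MeasurableSet.of_mem_measurableCylinders hs),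
      Measure.map_apply hres (MeasurableSet.of_mem_measurableCylinders hs)]
    obtain ⟨Δ, S, -, rfl⟩ := (mem_measurableCylinders s).1 hs
    refine h (Δ.map (Function.Embedding.subtype _)) _ (Finset.disjoint_left.2 fun j hj => ?_)
      fun σ σ' hσ => ?_
    · obtain ⟨j', -, rfl⟩ := Finset.mem_map.1 hj
      exact j'.2
    · change (Δ.restrict (res σ) ∈ S) = (Δ.restrict (res σ') ∈ S)
      congr 1
      exact funext fun j => hσ j.1.1 (Finset.mem_map_of_mem _ j.2)
  · rw [Measure.map_apply hres MeasurableSet.univ, Measure.map_apply hres MeasurableSet.univ]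
    exact h ∅ _ (Finset.disjoint_empty_left Λ) fun _ _ _ => rfl

section Limit

variable {β h : ℝ} {k : Site d → ℝ} {K : Finset (Site d)} {τ : Conf d} {ι : Type*}
  {l : Filter ι} [l.NeBot] {V : ι → Finset (Site d)} {μ : Measure (Conf d)}
  (hK : ∀ i ∉ K, k i = 0) (hV : ∀ A : Finset (Site d), ∀ᶠ n in l, A ⊆ V n)
  (hlim : ∀ f : Conf d → ℝ, LocalFun f →
    Tendsto (fun n => ∫ σ, f σ ∂(nuMeas β h k (V n) τ)) l (nhds (∫ σ, f σ ∂μ)))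
include hK hV hlim

theorem integral_indicator_cylB_mul_eq (Λ : Finset (Site d)) (a : ↥Λ → Bool)
    {g : Conf d → ℝ} (hg : LocalFun g) (hgΛ : DependsOn g (↑Λ)ᶜ) :
    ∫ σ, (cylB Λ a).indicator 1 σ * g σ ∂μ = ∫ σ, gibbsWB β h k Λ a σ * g σ ∂μ := by
  have hF : LocalFun fun σ => (cylB Λ a).indicator 1 σ * g σ :=
    (LocalFun.of_dependsOn (DependsOn.indicator_one (dependsOn_mem_cylB Λ a))).mul hg
  have hG : LocalFun fun σ => gibbsWB β h k Λ a σ * g σ :=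
    (localFun_gibbsWB hK β h Λ a).mul hg
  refine tendsto_nhds_unique ((hlim _ hF).congr' ?_) (hlim _ hG)
  filter_upwards [hV Λ, hV (coupled k K Λ), hV (Λ.biUnion (nbhd K))] with n hΛ hS hJ
  rw [integral_nuMeas _ _ _ _ _ hF.measurable, integral_nuMeas _ _ _ _ _ hG.measurable]
  exact sum_nu_indicator_cylB_mul_eq hK hΛ hS (Finset.biUnion_subset.1 hJ) a hgΛ

theorem measure_cylB_inter_eq_lintegral [IsFiniteMeasure μ] (Λ : Finset (Site d))
    (a : ↥Λ → Bool) {Δ : Finset (Site d)} (hΔ : Disjoint Δ Λ) {B : Set (Conf d)}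
    (hB : DependsOn (· ∈ B) ↑Δ) :
    μ (cylB Λ a ∩ B) = ∫⁻ τ' in B, ENNReal.ofReal (gibbsWB β h k Λ a τ') ∂μ := by
  have hBmeas := measurableSet_of_dependsOn hB
  have hγ := integrable_gibbsWB hK β h Λ a (μ := μ)
  have hBΛ : DependsOn (B.indicator (1 : Conf d → ℝ)) (↑Λ)ᶜ :=
    DependsOn.mono (fun j hj => Finset.disjoint_left.1 hΔ hj) (DependsOn.indicator_one hB)
  have hDLR := integral_indicator_cylB_mul_eq hK hV hlim Λ a
    (.of_dependsOn (DependsOn.indicator_one hB)) hBΛ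
  have hleft :
      ∫ σ, (cylB Λ a).indicator 1 σ * B.indicator 1 σ ∂μ = μ.real (cylB Λ a ∩ B) := by
    rw [← integral_indicator_one ((measurableSet_of_dependsOn (dependsOn_mem_cylB Λ a)).inter
      hBmeas)]
    exact integral_congr_ae (ae_of_all _ fun σ => by
      rw [Set.inter_indicator_one, Pi.mul_apply])
  have hright : ∫ σ, gibbsWB β h k Λ a σ * B.indicator 1 σ ∂μ
      = ∫ σ in B, gibbsWB β h k Λ a σ ∂μ := by
    rw [← integral_indicator hBmeas]
    refine integral_congr_ae (ae_of_all _ fun σ => ?_)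
    by_cases hσ : σ ∈ B <;> simp [hσ]
  rw [← ofReal_integral_eq_lintegral_ofReal hγ.integrableOn
      (ae_of_all _ (gibbsWB_nonneg β h k Λ a)), ← hright, ← hDLR, hleft, measureReal_def,
    ENNReal.ofReal_toReal (measure_ne_top _ _)]

theorem isGibbsB_of_tendsto [IsFiniteMeasure μ] : IsGibbsB β h k μ := by
  intro Λ a B hB
  have hγ := integrable_gibbsWB hK β h Λ a (μ := μ)
  have := isFiniteMeasure_withDensity_ofReal hγ.2
  have hBmeas : MeasurableSet B :=
    (measurable_pi_lambda _ fun j => measurable_pi_apply _).comap_le _ hB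
  have hDLR := eq_on_outer_of_eq_on_local (ν₁ := μ.restrict (cylB Λ a))
    (ν₂ := μ.withDensity fun τ => ENNReal.ofReal (gibbsWB β h k Λ a τ)) (fun Δ B' hΔ hB' => by
      rw [Measure.restrict_apply (measurableSet_of_dependsOn hB'), Set.inter_comm,
        withDensity_apply _ (measurableSet_of_dependsOn hB')]
      exact measure_cylB_inter_eq_lintegral hK hV hlim Λ a hΔ hB') hB
  rwa [Measure.restrict_apply hBmeas, Set.inter_comm, withDensity_apply _ hBmeas] at hDLR

end Limit

theorem stmt8_general {d : ℕ} (β h R : ℝ)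
    (k : Site d → ℝ)
    (hrange : ∀ i : Site d, R ^ 2 < (normSq i : ℝ) → k i = 0)
    (τ : Conf d)
    (μ : Measure (Conf d)) [IsProbabilityMeasure μ]
    (φ : ℕ → ℕ) (hφ : StrictMono φ)
    (hlim : ∀ f : Conf d → ℝ, LocalFun f →
      Tendsto (fun n => ∫ σ, f σ ∂(nuMeas β h k (boxCc (φ n)) τ)) atTop
        (nhds (∫ σ, f σ ∂μ))) :
    IsGibbsB β h k μ :=
  isGibbsB_of_tendsto (fun _ hi => eq_zero_of_notMem_boxCc hrange hi)
    (fun A => hφ.tendsto_atTop.eventually (eventually_subset_boxCc A)) hlim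

/-- Any weak limit point `μ` of the finite volume stationary measures
`ν_Λ^τ` as `Λ ↑ ℤ^d` (along hypercubes) is a Gibbs measure for the potential
`Φ_{{i}}(σ) = -βhσ_i`, `Φ_{U_i}(σ) = -log cosh(β Σ_j k(i-j)σ_j + βh)`,
`U_i = {j : k(i-j) ≠ 0}`, `Φ_A = 0` otherwise. -/
theorem stmt8 {d : ℕ} (hd : 0 < d) (β h R : ℝ) (hβ : 0 < β) (hR : 0 < R)
    (k : Site d → ℝ) (hsym : ∀ i : Site d, k (-i) = k i)
    (hrange : ∀ i : Site d, R ^ 2 < (normSq i : ℝ) → k i = 0)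
    (τ : Conf d)
    (μ : Measure (Conf d)) [IsProbabilityMeasure μ]
    (φ : ℕ → ℕ) (hφ : StrictMono φ)
    (hlim : ∀ f : Conf d → ℝ, LocalFun f →
      Tendsto (fun n => ∫ σ, f σ ∂(nuMeas β h k (boxCc (φ n)) τ)) atTop
        (nhds (∫ σ, f σ ∂μ))) :
    IsGibbsB β h k μ :=
  stmt8_general β h R k hrange τ μ φ hφ hlim

end
end PCA
end

section
/- Let d = 2, h = 0, β > 0, and let k : Z^2 → ℝ be symmetric with k(i) = 0 for |i| > 1 and k(0) = 0. Let Λ ⊂ Z^2 be finite, τ ∈ {−1,1}^{Z^2}, Λ_o = Λ ∩ Z^2_o and Λ_e = Λ ∩ Z^2_e. Then under the finite-volume Gibbs measure μ_Λ^τ for the potential Φ with Φ_{U_i}(σ) = −log cosh(β Σ_j k(i−j)σ_j), the restrictions σ_{Λ_o} and σ_{Λ_e} are independent: μ_Λ^τ = μ_{Λ_e}^τ ⊗ μ_{Λ_o}^τ as a product measure on {−1,1}^{Λ_e} × {−1,1}^{Λ_o}. -/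
open MeasureTheory Filter

namespace PCA

noncomputable section

/-- The even sublattice part `Λ_e = Λ ∩ ℤ²_e` of a finite volume. -/
def evenPart (Λ : Finset (Site 2)) : Finset (Site 2) :=
  Λ.filter fun i => Even (i 0 + i 1)

/-- The odd sublattice part `Λ_o = Λ ∩ ℤ²_o` of a finite volume. -/
def oddPart (Λ : Finset (Site 2)) : Finset (Site 2) :=
  Λ.filter fun i => ¬ Even (i 0 + i 1)

/-!
The term of the Hamiltonian indexed by a site `i` depends only on the spins in
`U_i = {j | k (i - j) ≠ 0}`. If every `U_i` lies inside or outside a set of sites `p`, each term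
sees either only the spins of `Λ ∩ p` or only those of `Λ \ p`, so `H_Λ = H_{Λ ∩ p} + H_{Λ \ p}`
and both the Boltzmann weight and the partition function factor. A nonzero `k (i - j)` with
`k 0 = 0` and range one forces `|i - j| = 1`, so `i` and `j` lie on opposite sublattices of `ℤ²`
and the even sublattice is such a `p`.
-/

section Decoupling

variable {d : ℕ} {k : Site d → ℝ} {β h : ℝ} {Λ : Finset (Site d)} {τ : Conf d}
  {p : Site d → Prop} [DecidablePred p]

def restrictFilter (p : Site d → Prop) [DecidablePred p] (a : ↥Λ → Bool) :
    ↥(Λ.filter p) → Bool :=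
  fun j => a ⟨j.1, Finset.mem_of_mem_filter j.1 j.2⟩

def Decouples (k : Site d → ℝ) (p : Site d → Prop) : Prop :=
  ∀ i, (∀ j, k (i - j) ≠ 0 → p j) ∨ ∀ j, k (i - j) ≠ 0 → ¬ p j

lemma fill_apply_coe (a : ↥Λ → Bool) (τ : Conf d) (i : ↥Λ) : fill Λ a τ i = a i := by
  simp [fill]

lemma fill_filter_apply (a : ↥Λ → Bool) (τ : Conf d) {j : Site d} (hj : p j) :
    fill (Λ.filter p) (restrictFilter p a) τ j = fill Λ a τ j := by
  by_cases hjΛ : j ∈ Λ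
  · simp [fill, restrictFilter, hjΛ, hj]
  · simp [fill, hjΛ]

lemma field_fill_filter {i : Site d} (hi : ∀ j, k (i - j) ≠ 0 → p j) (a : ↥Λ → Bool)
    (τ : Conf d) :
    field k i (fill (Λ.filter p) (restrictFilter p a) τ) = field k i (fill Λ a τ) := by
  refine tsum_congr fun j => ?_
  by_cases hij : k (i - j) = 0
  · simp [hij]
  · rw [fill_filter_apply a τ (hi j hij)]

lemma sum_restrictFilter_add_sum_restrictFilter_not (g : Bool → ℝ) (a : ↥Λ → Bool) :
    ∑ i : ↥(Λ.filter p), g (restrictFilter p a i) +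
        ∑ i : ↥(Λ.filter fun i => ¬ p i), g (restrictFilter (fun i => ¬ p i) a i) =
      ∑ i : ↥Λ, g (a i) := by
  let σ : Conf d := fill Λ a fun _ => false
  have hσ (q : Site d → Prop) [DecidablePred q] :
      ∑ i : ↥(Λ.filter q), g (restrictFilter q a i) = ∑ i ∈ Λ.filter q, g (σ i) := by
    rw [← Finset.sum_coe_sort _ fun i => g (σ i)]
    refine Finset.sum_congr rfl fun i _ => ?_
    simp [σ, fill, restrictFilter, (Finset.mem_filter.mp i.2).1]
  rw [hσ, hσ, Finset.sum_filter_add_sum_filter_not, ← Finset.sum_coe_sort _ fun i => g (σ i)]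
  simp only [σ, fill_apply_coe]

def hamTerm (β h : ℝ) (k : Site d → ℝ) (Λ : Finset (Site d)) (a : ↥Λ → Bool) (τ : Conf d)
    (i : Site d) : ℝ :=
  Set.indicator {i : Site d | ∃ j ∈ Λ, k (i - j) ≠ 0}
    (fun i => -Real.log (Real.cosh (β * field k i (fill Λ a τ) + β * h))) i

lemma hamB_eq (a : ↥Λ → Bool) :
    hamB β h k Λ a τ = ∑ i : ↥Λ, -(β * h * val (a i)) + ∑' i, hamTerm β h k Λ a τ i :=
  rfl

lemma hamTerm_filter {i : Site d} (hi : ∀ j, k (i - j) ≠ 0 → p j) (a : ↥Λ → Bool) :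
    hamTerm β h k (Λ.filter p) (restrictFilter p a) τ i = hamTerm β h k Λ a τ i := by
  have hU : (∃ j ∈ Λ.filter p, k (i - j) ≠ 0) ↔ ∃ j ∈ Λ, k (i - j) ≠ 0 :=
    ⟨fun ⟨j, hj, hij⟩ => ⟨j, Finset.mem_of_mem_filter j hj, hij⟩,
      fun ⟨j, hj, hij⟩ => ⟨j, Finset.mem_filter.mpr ⟨hj, hi j hij⟩, hij⟩⟩
  simp only [hamTerm, Set.indicator_apply, Set.mem_ofPred_eq, hU, field_fill_filter hi]

lemma hamTerm_filter_eq_zero {i : Site d} (hi : ∀ j, k (i - j) ≠ 0 → ¬ p j)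
    (b : ↥(Λ.filter p) → Bool) : hamTerm β h k (Λ.filter p) b τ i = 0 := by
  refine Set.indicator_of_notMem ?_ _
  rintro ⟨j, hj, hij⟩
  exact hi j hij (Finset.mem_filter.mp hj).2

lemma hamTerm_eq_add (hp : Decouples k p) (a : ↥Λ → Bool) (i : Site d) :
    hamTerm β h k Λ a τ i =
      hamTerm β h k (Λ.filter p) (restrictFilter p a) τ i +
        hamTerm β h k (Λ.filter fun i => ¬ p i) (restrictFilter (fun i => ¬ p i) a) τ i := by
  rcases hp i with hi | hi
  · rw [hamTerm_filter hi, hamTerm_filter_eq_zero fun j hij => not_not_intro (hi j hij),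
      add_zero]
  · rw [hamTerm_filter (p := fun i => ¬ p i) hi, hamTerm_filter_eq_zero hi, zero_add]

lemma summable_hamTerm (hk : k.HasFiniteSupport) (a : ↥Λ → Bool) :
    Summable (hamTerm β h k Λ a τ) := by
  refine summable_of_hasFiniteSupport (((Λ.finite_toSet.add hk).subset ?_).subset
    Set.support_indicator_subset)
  rintro i ⟨j, hj, hij⟩
  exact Set.mem_add.mpr ⟨j, hj, i - j, hij, add_sub_cancel j i⟩

lemma hamB_eq_add (hk : k.HasFiniteSupport) (hp : Decouples k p) (a : ↥Λ → Bool) :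
    hamB β h k Λ a τ =
      hamB β h k (Λ.filter p) (restrictFilter p a) τ +
        hamB β h k (Λ.filter fun i => ¬ p i) (restrictFilter (fun i => ¬ p i) a) τ := by
  rw [hamB_eq, hamB_eq, hamB_eq, tsum_congr (hamTerm_eq_add hp a),
    (summable_hamTerm hk _).tsum_add (summable_hamTerm hk _),
    ← sum_restrictFilter_add_sum_restrictFilter_not (p := p) (fun s => -(β * h * val s)) a]
  ring

variable (p) in
def splitEquiv (Λ : Finset (Site d)) :
    (↥Λ → Bool) ≃ (↥(Λ.filter p) → Bool) × (↥(Λ.filter fun i => ¬ p i) → Bool) where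
  toFun a := (restrictFilter p a, restrictFilter (fun i => ¬ p i) a)
  invFun b i :=
    if hi : p i then b.1 ⟨i, Finset.mem_filter.mpr ⟨i.2, hi⟩⟩
    else b.2 ⟨i, Finset.mem_filter.mpr ⟨i.2, hi⟩⟩
  left_inv a := by
    funext i
    by_cases hi : p i <;> simp [restrictFilter, hi]
  right_inv b := by
    refine Prod.ext (funext fun j => ?_) (funext fun j => ?_)
    all_goals simp [restrictFilter, (Finset.mem_filter.mp j.2).2]

lemma sum_exp_neg_hamB_eq_mul (hk : k.HasFiniteSupport) (hp : Decouples k p) :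
    ∑ a : ↥Λ → Bool, Real.exp (-hamB β h k Λ a τ) =
      (∑ b : ↥(Λ.filter p) → Bool, Real.exp (-hamB β h k (Λ.filter p) b τ)) *
        ∑ b : ↥(Λ.filter fun i => ¬ p i) → Bool,
          Real.exp (-hamB β h k (Λ.filter fun i => ¬ p i) b τ) := by
  rw [Finset.sum_mul_sum, ← Finset.sum_product', Finset.univ_product_univ]
  refine Fintype.sum_equiv (splitEquiv p Λ) _ _ fun a => ?_
  rw [hamB_eq_add hk hp a, neg_add, Real.exp_add]
  rfl

theorem gibbsWB_eq_mul_of_decouples (hk : k.HasFiniteSupport) (hp : Decouples k p)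
    (a : ↥Λ → Bool) :
    gibbsWB β h k Λ a τ =
      gibbsWB β h k (Λ.filter p) (restrictFilter p a) τ *
        gibbsWB β h k (Λ.filter fun i => ¬ p i) (restrictFilter (fun i => ¬ p i) a) τ := by
  simp only [gibbsWB]
  rw [hamB_eq_add hk hp a, sum_exp_neg_hamB_eq_mul hk hp, neg_add, Real.exp_add,
    div_mul_div_comm]

end Decoupling

lemma hasFiniteSupport_of_normSq {d : ℕ} {k : Site d → ℝ}
    (hrange : ∀ i : Site d, (1 : ℝ) < (normSq i : ℝ) → k i = 0) : k.HasFiniteSupport := by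
  refine (Set.finite_Icc (-1 : Site d) 1).subset fun i hi => ?_
  have hn : normSq i ≤ 1 := by
    by_contra hc
    exact hi (hrange i (by exact_mod_cast not_le.mp hc))
  have ht (t : Fin d) : |i t| ≤ 1 := sq_le_one_iff_abs_le_one _ |>.mp <|
    (Finset.single_le_sum (fun s _ => sq_nonneg (i s)) (Finset.mem_univ t)).trans hn
  exact ⟨fun t => (abs_le.mp (ht t)).1, fun t => (abs_le.mp (ht t)).2⟩

lemma normSq_eq_one_of_ne_zero {d : ℕ} {k : Site d → ℝ}
    (hrange : ∀ i : Site d, (1 : ℝ) < (normSq i : ℝ) → k i = 0) (hk0 : k 0 = 0) {x : Site d}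
    (hx : k x ≠ 0) : normSq x = 1 := by
  have hle : normSq x ≤ 1 := by
    by_contra hc
    exact hx (hrange x (by exact_mod_cast not_le.mp hc))
  have hne : normSq x ≠ 0 := by
    intro h0
    have hsq := (Finset.sum_eq_zero_iff_of_nonneg fun t _ => sq_nonneg (x t)).mp h0
    refine hx ?_
    rw [show x = 0 from funext fun t => pow_eq_zero_iff two_ne_zero |>.mp (hsq t (by simp)), hk0]
  have hnonneg : 0 ≤ normSq x := Finset.sum_nonneg fun t _ => sq_nonneg (x t)
  omega

lemma not_even_add_of_normSq_eq_one {x : Site 2} (hx : normSq x = 1) : ¬ Even (x 0 + x 1) := by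
  have hsq : x 0 ^ 2 + x 1 ^ 2 = 1 := by simpa [normSq, Fin.sum_univ_two] using hx
  have hpar : Even (x 0 + x 1) ↔ Even (x 0 ^ 2 + x 1 ^ 2) := by simp [parity_simps]
  rw [hpar, hsq]
  decide

lemma decouples_even_sublattice {k : Site 2 → ℝ}
    (hrange : ∀ i : Site 2, (1 : ℝ) < (normSq i : ℝ) → k i = 0) (hk0 : k 0 = 0) :
    Decouples k fun i => Even (i 0 + i 1) := by
  intro i
  have hflip (j : Site 2) (hij : k (i - j) ≠ 0) : Even (j 0 + j 1) ↔ ¬ Even (i 0 + i 1) := by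
    have h := not_even_add_of_normSq_eq_one (normSq_eq_one_of_ne_zero hrange hk0 hij)
    rw [Pi.sub_apply, Pi.sub_apply, show i 0 - j 0 + (i 1 - j 1) = i 0 + i 1 - (j 0 + j 1) by ring,
      Int.even_sub] at h
    tauto
  by_cases hi : Even (i 0 + i 1)
  · exact Or.inr fun j hij => mt (hflip j hij).mp (not_not_intro hi)
  · exact Or.inl fun j hij => (hflip j hij).mpr hi

theorem stmt15_general (β : ℝ)
    (k : Site 2 → ℝ)
    (hrange : ∀ i : Site 2, (1 : ℝ) < (normSq i : ℝ) → k i = 0)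
    (hk0 : k 0 = 0)
    (Λ : Finset (Site 2)) (τ : Conf 2) :
    ∀ a : ↥Λ → Bool,
      gibbsWB β 0 k Λ a τ =
        gibbsWB β 0 k (evenPart Λ)
            (fun j : ↥(evenPart Λ) => a ⟨j.1, Finset.mem_of_mem_filter j.1 j.2⟩) τ *
          gibbsWB β 0 k (oddPart Λ)
            (fun j : ↥(oddPart Λ) => a ⟨j.1, Finset.mem_of_mem_filter j.1 j.2⟩) τ :=
  gibbsWB_eq_mul_of_decouples (hasFiniteSupport_of_normSq hrange)
    (decouples_even_sublattice hrange hk0)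

/-- (`d = 2`, `h = 0`, `k(0) = 0`, range one.) Under the finite volume
Gibbs measure `μ_Λ^τ`, the spins on the odd and even sublattices are independent:
`μ_Λ^τ = μ_{Λ_e}^τ ⊗ μ_{Λ_o}^τ`. -/
theorem stmt15 (β : ℝ) (hβ : 0 < β)
    (k : Site 2 → ℝ) (hsym : ∀ i : Site 2, k (-i) = k i)
    (hrange : ∀ i : Site 2, (1 : ℝ) < (normSq i : ℝ) → k i = 0)
    (hk0 : k 0 = 0)
    (Λ : Finset (Site 2)) (τ : Conf 2) :
    ∀ a : ↥Λ → Bool,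
      gibbsWB β 0 k Λ a τ =
        gibbsWB β 0 k (evenPart Λ)
            (fun j : ↥(evenPart Λ) => a ⟨j.1, Finset.mem_of_mem_filter j.1 j.2⟩) τ *
          gibbsWB β 0 k (oddPart Λ)
            (fun j : ↥(oddPart Λ) => a ⟨j.1, Finset.mem_of_mem_filter j.1 j.2⟩) τ :=
  stmt15_general β k hrange hk0 Λ τ

end
end PCA
end
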